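/- arXiv:2001.10869 — 3 statements merged into one kernel-verified Lean document; each statement's English description precedes it below -/
import Mathlib

section
/- For any monomials y^I ȳ^J and y^K ȳ^L in the Wick algebra, the Bargmann-Fock operator of their Wick product equals the composition of their Bargmann-Fock operators: T_{(y^I ȳ^J) ⋆ (y^K ȳ^L)} = T_{y^I ȳ^J} ∘ T_{y^K ȳ^L} as operators on ℂ[[y_1,...,y_n]][[ħ]]. -/
open Finsupp MeasureTheory
open scoped Classical

noncomputable section

/-- Multi-indices for `n` variables. -/
abbrev MI (n : ℕ) := Fin n →₀ ℕ

/-- `|I| = i₁ + ⋯ + iₙ`. -/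
def mdeg {n : ℕ} (I : MI n) : ℕ := I.sum fun _ v => v

/-- `I! = i₁! ⋯ iₙ!`. -/
def mfact {n : ℕ} (I : MI n) : ℕ := I.prod fun _ v => v.factorial

/-- The Wick algebra `ℂ[[y, ȳ]][[ħ]]`, as coefficient functions:
`f (k, I, J)` is the coefficient of `ħ^k y^I ȳ^J`. -/
abbrev W (n : ℕ) := ℕ × MI n × MI n → ℂ

/-- The constant multi-index with all entries `k`. -/
def constMI (n k : ℕ) : MI n := Finsupp.equivFunOnFinite.symm fun _ => k

/-- The Wick product
`f ⋆ g = exp(−ħ Σᵢ ∂_{yᵢ} ∂_{ȳ'ᵢ}) (f(y,ȳ) g(y',ȳ'))|_{y = y'}`, written out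
coefficientwise (the inner sums are finite for each fixed coefficient). -/
def wick {n : ℕ} (f g : W n) : W n := fun x =>
  ∑ M ∈ Finset.Iic (constMI n x.1),
    if mdeg M ≤ x.1 then
      ∑ p ∈ Finset.HasAntidiagonal.antidiagonal (x.1 - mdeg M),
        ∑ i ∈ Finset.HasAntidiagonal.antidiagonal x.2.1,
          ∑ j ∈ Finset.HasAntidiagonal.antidiagonal x.2.2,
            ((-1 : ℂ) ^ mdeg M / (mfact M : ℂ)) *
              ((mfact (i.1 + M) : ℂ) / (mfact i.1 : ℂ)) *
              ((mfact (j.2 + M) : ℂ) / (mfact j.2 : ℂ)) *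
              f (p.1, i.1 + M, j.1) * g (p.2, i.2, j.2 + M)
    else 0

/-- Pointwise (classical, commutative) product of formal series. -/
def wmul {n : ℕ} (f g : W n) : W n := fun x =>
  ∑ p ∈ Finset.HasAntidiagonal.antidiagonal x.1, ∑ i ∈ Finset.HasAntidiagonal.antidiagonal x.2.1,
    ∑ j ∈ Finset.HasAntidiagonal.antidiagonal x.2.2,
      f (p.1, i.1, j.1) * g (p.2, i.2, j.2)

/-- The monomial `c · ħ^k y^I ȳ^J`. -/
def wmono {n : ℕ} (c : ℂ) (k : ℕ) (I J : MI n) : W n :=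
  fun x => if x = (k, I, J) then c else 0

/-- The unit `1` of the Wick algebra. -/
def wone (n : ℕ) : W n := wmono 1 0 0 0

/-- Pointwise powers `f^m`. -/
def wpow {n : ℕ} (f : W n) : ℕ → W n
  | 0 => wone n
  | m + 1 => wmul (wpow f m) f

/-- `f` has all of its monomials `ħ^k y^I ȳ^J` of degree `2k + |I| + |J| ≥ a`. -/
def wdegGE {n : ℕ} (f : W n) (a : ℕ) : Prop :=
  ∀ x, f x ≠ 0 → a ≤ 2 * x.1 + mdeg x.2.1 + mdeg x.2.2

/-- The extended Wick algebra: `ħ`-exponents may be negative integers. -/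
abbrev WE (n : ℕ) := ℤ × MI n × MI n → ℂ

/-- Embedding of the Wick algebra into its extension. -/
def embW {n : ℕ} (f : W n) : WE n := fun x =>
  if 0 ≤ x.1 then f (x.1.toNat, x.2) else 0

/-- Degree `2k + |I| + |J| ∈ ℤ` of a monomial in the extended Wick algebra. -/
def edeg {n : ℕ} (x : ℤ × MI n × MI n) : ℤ :=
  2 * x.1 + (mdeg x.2.1 : ℤ) + (mdeg x.2.2 : ℤ)

/-- Pointwise product on the extended Wick algebra. -/
def emul {n : ℕ} (f g : WE n) : WE n := fun x =>
  ∑' k : ℤ, ∑ i ∈ Finset.HasAntidiagonal.antidiagonal x.2.1, ∑ j ∈ Finset.HasAntidiagonal.antidiagonal x.2.2,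
    f (k, i.1, j.1) * g (x.1 - k, i.2, j.2)

/-- The Wick product on the extended Wick algebra. -/
def ewick {n : ℕ} (f g : WE n) : WE n := fun x =>
  ∑' q : ℤ × MI n, ∑ i ∈ Finset.HasAntidiagonal.antidiagonal x.2.1, ∑ j ∈ Finset.HasAntidiagonal.antidiagonal x.2.2,
    ((-1 : ℂ) ^ mdeg q.2 / (mfact q.2 : ℂ)) *
      ((mfact (i.1 + q.2) : ℂ) / (mfact i.1 : ℂ)) *
      ((mfact (j.2 + q.2) : ℂ) / (mfact j.2 : ℂ)) *
      f (q.1, i.1 + q.2, j.1) * g (x.1 - q.1 - (mdeg q.2 : ℤ), i.2, j.2 + q.2)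

/-- The unit of the extended Wick algebra. -/
def eone (n : ℕ) : WE n := fun x => if x = ((0 : ℤ), (0 : MI n), (0 : MI n)) then 1 else 0

/-- Wick (star) powers in the extended Wick algebra. -/
def epow {n : ℕ} (f : WE n) : ℕ → WE n
  | 0 => eone n
  | m + 1 => ewick (epow f m) f

/-- The classical exponential `exp(H/ħ) = Σₘ (1/m!) Hᵐ/ħᵐ`, an element of the
extended Wick algebra. -/
def expOverHbar {n : ℕ} (H : W n) : WE n := fun x =>
  ∑' m : ℕ, ((m.factorial : ℂ))⁻¹ * embW (wpow H m) (x.1 + (m : ℤ), x.2)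

/-- The star-exponential `exp^⋆(X) = Σₘ X^{⋆m}/m!`. -/
def starExp {n : ℕ} (X : WE n) : WE n := fun x =>
  ∑' m : ℕ, ((m.factorial : ℂ))⁻¹ * epow X m x

/-- The Fock space `ℂ[[y]][[ħ]]`: `s (k, I)` is the coefficient of `ħ^k y^I`. -/
abbrev F (n : ℕ) := ℕ × MI n → ℂ

/-- The extended Fock space (negative powers of `ħ` allowed). -/
abbrev FE (n : ℕ) := ℤ × MI n → ℂ

/-- Embedding of the Fock space into its extension. -/
def embF {n : ℕ} (s : F n) : FE n := fun x =>
  if 0 ≤ x.1 then s (x.1.toNat, x.2) else 0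

/-- The Bargmann-Fock action on the Fock space: the normally ordered monomial
`ħ^m y^I ȳ^J` acts as `(ħ ∂/∂y)^J ∘ m_{y^I}`, extended `ℂ[[ħ]]`-linearly. -/
def bf {n : ℕ} (f : W n) (s : F n) : F n := fun x =>
  ∑ m ∈ Finset.range (x.1 + 1), ∑ J ∈ Finset.Iic (constMI n x.1),
    if m + mdeg J ≤ x.1 then
      ∑ I ∈ Finset.Iic (x.2 + J),
        f (m, I, J) * ((mfact (x.2 + J) : ℂ) / (mfact x.2 : ℂ)) *
          s (x.1 - m - mdeg J, x.2 + J - I)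
    else 0

/-- The Bargmann-Fock action of extended Wick elements on the extended Fock space. -/
def ebf {n : ℕ} (E : WE n) (s : FE n) : FE n := fun x =>
  ∑' q : ℤ × MI n, ∑ I ∈ Finset.Iic (x.2 + q.2),
    E (q.1, I, q.2) * ((mfact (x.2 + q.2) : ℂ) / (mfact x.2 : ℂ)) *
      s (x.1 - q.1 - (mdeg q.2 : ℤ), x.2 + q.2 - I)

/-- Complex conjugation on the Wick algebra: swaps `y^I ↔ ȳ^I` and conjugates
coefficients. -/
def conjW {n : ℕ} (f : W n) : W n := fun x => (starRingEnd ℂ) (f (x.1, x.2.2, x.2.1))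

/-- The formal (oscillatory Gaussian) integral `ħ^{-n} ∫ h e^{(−|y|²+φ)/ħ}` as a
formal Laurent series in `ħ` (coefficient of `ħ^d`), defined by expanding
`e^{φ/ħ}` and applying the Wick contraction rule
`ħ^{-n} ∫ y^I ȳ^J e^{−|y|²/ħ} = δ_{IJ} I! ħ^{|I|}`. -/
def FI {n : ℕ} (φ h : W n) : ℤ → ℂ := fun d =>
  ∑' q : ℕ × MI n,
    if 0 ≤ d + (q.1 : ℤ) - (mdeg q.2 : ℤ) then
      ((q.1.factorial : ℂ))⁻¹ * (mfact q.2 : ℂ) *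
        wmul (wpow φ q.1) h ((d + (q.1 : ℤ) - (mdeg q.2 : ℤ)).toNat, q.2, q.2)
    else 0

/-- The formal inner product `⟨f, g⟩ = ħ^{-n} ∫ f ḡ e^{(−|y|²+φ)/ħ}`. -/
def ip {n : ℕ} (φ f g : W n) : ℤ → ℂ := FI φ (wmul f (conjW g))


section AuxBFW

lemma core1' (i : ℕ) : ∀ (x b : ℕ), i ≤ x → b ≤ x →
    ∑ m ∈ Finset.range (i + 1), (-1 : ℤ) ^ m * (i.choose m) * ((x - m).choose b)
      = if i ≤ b then ((x - i).choose (b - i) : ℤ) else 0 := by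
  induction i with
  | zero => intro x b _ _; simp
  | succ i ih =>
    intro x b hix hbx
    by_cases hbxeq : b = x
    · subst hbxeq
      rw [Finset.sum_eq_single_of_mem 0 (by simp) ?u]
      · rw [if_pos (by omega : i + 1 ≤ b)]
        have h2 : (b - (i+1)).choose (b - (i+1)) = 1 := Nat.choose_self _
        simp [h2, Nat.choose_self]
      case u =>
        intro m _ hm
        have h0 : b - m < b := by omega
        rw [Nat.choose_eq_zero_of_lt h0]
        ring
    · have hbx' : b ≤ x - 1 := by omega
      have hix' : i ≤ x - 1 := by omega
      have pascal : ∀ m, ((i+1).choose (m+1) : ℤ) = i.choose m + i.choose (m+1) := by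
        intro m
        have := Nat.choose_succ_succ i m
        push_cast [this]
        ring
      have step : ∑ m ∈ Finset.range (i + 2), (-1 : ℤ) ^ m * ((i+1).choose m) * ((x - m).choose b)
          = (∑ m ∈ Finset.range (i + 1), (-1 : ℤ) ^ m * (i.choose m) * ((x - m).choose b))
            - ∑ m ∈ Finset.range (i + 1), (-1 : ℤ) ^ m * (i.choose m) * ((x - 1 - m).choose b) := by
        rw [Finset.sum_range_succ' _ (i+1)]
        have expand : ∑ m ∈ Finset.range (i + 1), (-1:ℤ)^(m+1) * ((i+1).choose (m+1)) * ((x - (m+1)).choose b)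
            = (∑ m ∈ Finset.range (i + 1), (-1:ℤ)^(m+1) * (i.choose (m+1)) * ((x - (m+1)).choose b))
              + ∑ m ∈ Finset.range (i + 1), (-1:ℤ)^(m+1) * (i.choose m) * ((x - (m+1)).choose b) := by
          rw [← Finset.sum_add_distrib]
          exact Finset.sum_congr rfl fun m _ => by rw [pascal]; ring
        rw [expand]
        have sh1 : (∑ m ∈ Finset.range (i + 1), (-1:ℤ)^(m+1) * (i.choose (m+1)) * ((x - (m+1)).choose b))
              + ((-1:ℤ)^0 * ((i+1).choose 0) * ((x - 0).choose b))
            = ∑ m ∈ Finset.range (i + 2), (-1 : ℤ) ^ m * (i.choose m) * ((x - m).choose b) := by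
          rw [Finset.sum_range_succ' _ (i+1)]
          simp
        have sh2 : ∑ m ∈ Finset.range (i + 2), (-1 : ℤ) ^ m * (i.choose m) * ((x - m).choose b)
            = ∑ m ∈ Finset.range (i + 1), (-1 : ℤ) ^ m * (i.choose m) * ((x - m).choose b) := by
          rw [Finset.sum_range_succ]
          simp [Nat.choose_eq_zero_of_lt (by omega : i < i + 1)]
        have sh3 : ∑ m ∈ Finset.range (i + 1), (-1:ℤ)^(m+1) * (i.choose m) * ((x - (m+1)).choose b)
            = - ∑ m ∈ Finset.range (i + 1), (-1 : ℤ) ^ m * (i.choose m) * ((x - 1 - m).choose b) := by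
          rw [← Finset.sum_neg_distrib]
          exact Finset.sum_congr rfl fun m _ => by
            have : x - (m+1) = x - 1 - m := by omega
            rw [this]; ring
        linarith [sh1, sh2, sh3]
      rw [step, ih x b (by omega) hbx, ih (x-1) b hix' hbx']
      by_cases hib : i + 1 ≤ b
      · rw [if_pos (by omega : i ≤ b), if_pos (by omega : i ≤ b), if_pos hib]
        have e1 : x - i = (x - 1 - i) + 1 := by omega
        have e2 : b - i = (b - (i+1)) + 1 := by omega
        have e3 : x - 1 - i = (x - (i+1)) := by omega
        rw [e1, e2, Nat.choose_succ_succ, e3]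
        push_cast
        ring
      · by_cases hib' : i ≤ b
        · have : b = i := by omega
          subst this
          rw [if_pos le_rfl, if_pos le_rfl, if_neg hib]
          simp
        · rw [if_neg hib', if_neg hib', if_neg hib]
          ring

lemma desc_mul_fact' (l b m : ℕ) (hm : m ≤ l) :
    l.descFactorial m * (b + l - m).factorial
      = l.factorial * b.factorial * ((b + l - m).choose b) := by
  have h1 : b ≤ b + l - m := by omega
  have h2 : (b + l - m).choose b * b.factorial * (b + l - m - b).factorial
      = (b + l - m).factorial := Nat.choose_mul_factorial_mul_factorial h1
  have h3 : b + l - m - b = l - m := by omega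
  rw [h3] at h2
  have h4 : (l - m).factorial * l.descFactorial m = l.factorial :=
    Nat.factorial_mul_descFactorial hm
  calc l.descFactorial m * (b + l - m).factorial
      = l.descFactorial m * ((b + l - m).choose b * b.factorial * (l - m).factorial) := by
        rw [h2]
    _ = ((l - m).factorial * l.descFactorial m) * b.factorial * ((b + l - m).choose b) := by
        ring
    _ = _ := by rw [h4]

lemma core2' (i l b : ℕ) (h : i ≤ b + l) :
    ∑ m ∈ Finset.range (min i l + 1),
        (-1 : ℤ) ^ m * (i.choose m) * (l.descFactorial m) * ((b + l - m).factorial)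
      = if i ≤ b then (b.factorial : ℤ) * ((b - i + l).descFactorial l) else 0 := by
  have hext : ∑ m ∈ Finset.range (min i l + 1),
        (-1 : ℤ) ^ m * (i.choose m) * (l.descFactorial m) * ((b + l - m).factorial)
      = ∑ m ∈ Finset.range (i + 1),
        (-1 : ℤ) ^ m * (i.choose m) * (l.descFactorial m) * ((b + l - m).factorial) := by
    apply Finset.sum_subset (Finset.range_subset_range.2 (by omega))
    intro m hm hm'
    simp only [Finset.mem_range] at hm hm'
    have hl : l < m := by omega
    rw [Nat.descFactorial_eq_zero_iff_lt.2 hl]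
    ring
  have hterm : ∀ m ∈ Finset.range (i + 1),
      (-1 : ℤ) ^ m * (i.choose m) * (l.descFactorial m) * ((b + l - m).factorial)
        = ((l.factorial : ℤ) * b.factorial) * ((-1 : ℤ) ^ m * (i.choose m) * ((b + l - m).choose b)) := by
    intro m hm
    simp only [Finset.mem_range] at hm
    by_cases hml : m ≤ l
    · have := desc_mul_fact' l b m hml
      have : ((l.descFactorial m : ℤ)) * ((b + l - m).factorial)
          = (l.factorial : ℤ) * b.factorial * ((b + l - m).choose b) := by exact_mod_cast this
      calc (-1 : ℤ) ^ m * (i.choose m) * (l.descFactorial m) * ((b + l - m).factorial)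
          = (-1 : ℤ) ^ m * (i.choose m) * ((l.descFactorial m : ℤ) * ((b + l - m).factorial)) := by
            ring
        _ = _ := by rw [this]; ring
    · have hmb : m ≤ b + l := by omega
      rw [Nat.descFactorial_eq_zero_iff_lt.2 (by omega : l < m),
        Nat.choose_eq_zero_of_lt (by omega : b + l - m < b)]
      push_cast
      ring
  rw [hext, Finset.sum_congr rfl hterm, ← Finset.mul_sum,
    core1' i (b + l) b h (by omega)]
  by_cases hib : i ≤ b
  · rw [if_pos hib, if_pos hib]
    have key : l.factorial * ((b + l - i).choose (b - i)) = (b - i + l).descFactorial l := by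
      have h1 : b - i ≤ b + l - i := by omega
      have h2 : (b + l - i).choose (b - i) * (b - i).factorial * ((b + l - i) - (b - i)).factorial
          = (b + l - i).factorial := Nat.choose_mul_factorial_mul_factorial h1
      have h3 : (b + l - i) - (b - i) = l := by omega
      rw [h3] at h2
      have h4 : ((b - i + l) - l).factorial * (b - i + l).descFactorial l = (b - i + l).factorial :=
        Nat.factorial_mul_descFactorial (by omega)
      have h5 : (b - i + l) - l = b - i := by omega
      rw [h5] at h4
      have h6 : b + l - i = b - i + l := by omega
      apply Nat.eq_of_mul_eq_mul_left (Nat.factorial_pos (b - i))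
      calc (b - i).factorial * (l.factorial * ((b + l - i).choose (b - i)))
          = (b + l - i).choose (b - i) * (b - i).factorial * l.factorial := by ring
        _ = (b + l - i).factorial := h2
        _ = (b - i + l).factorial := by rw [h6]
        _ = (b - i).factorial * (b - i + l).descFactorial l := h4.symm
    calc (l.factorial : ℤ) * b.factorial * ((b + l - i).choose (b - i))
        = (b.factorial : ℤ) * ((l.factorial : ℤ) * ((b + l - i).choose (b - i))) := by ring
      _ = (b.factorial : ℤ) * ((b - i + l).descFactorial l) := by
          rw [show ((l.factorial : ℤ) * ((b + l - i).choose (b - i)))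
              = (((l.factorial * ((b + l - i).choose (b - i))) : ℕ) : ℤ) by push_cast; ring,
            key]
  · rw [if_neg hib, if_neg hib, mul_zero]

variable {n : ℕ}

lemma mdeg_eq_sum (M : MI n) : mdeg M = ∑ t, M t := by
  rw [mdeg, Finsupp.sum_fintype] ; simp

lemma mfact_eq_prod (M : MI n) : mfact M = ∏ t, (M t).factorial := by
  rw [mfact, Finsupp.prod_fintype] ; simp [Nat.factorial]

lemma apply_le_mdeg (M : MI n) (t : Fin n) : M t ≤ mdeg M := by
  rw [mdeg_eq_sum]
  exact Finset.single_le_sum (fun _ _ => Nat.zero_le _) (Finset.mem_univ t)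

lemma mem_Iic_constMI {k : ℕ} {M : MI n} : M ∈ Finset.Iic (constMI n k) ↔ ∀ t, M t ≤ k := by
  simp [Finset.mem_Iic, constMI, Finsupp.le_def]

lemma mdeg_add (A B : MI n) : mdeg (A + B) = mdeg A + mdeg B := by
  simp [mdeg_eq_sum, Finset.sum_add_distrib]

lemma mfact_pos (M : MI n) : 0 < mfact M := by
  rw [mfact_eq_prod]; exact Finset.prod_pos fun t _ => Nat.factorial_pos _

lemma mfact_ne_zero (M : MI n) : (mfact M : ℂ) ≠ 0 := by
  exact_mod_cast (mfact_pos M).ne'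

lemma sum_Iic_prod (N : MI n) (h : Fin n → ℕ → ℤ) :
    ∑ M ∈ Finset.Iic N, ∏ t, h t (M t)
      = ∏ t, ∑ m ∈ Finset.range (N t + 1), h t m := by
  rw [Finset.prod_univ_sum]
  apply Finset.sum_nbij' (i := fun (M : MI n) => (M : Fin n → ℕ))
    (j := fun p => Finsupp.equivFunOnFinite.symm p)
  · intro M hM
    rw [Finset.mem_Iic] at hM
    rw [Fintype.mem_piFinset]
    intro t
    rw [Finset.mem_range]
    exact Nat.lt_succ_of_le (hM t)
  · intro p hp
    rw [Fintype.mem_piFinset] at hp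
    rw [Finset.mem_Iic]
    intro t
    have := hp t
    rw [Finset.mem_range] at this
    simpa [Finsupp.equivFunOnFinite] using Nat.lt_succ_iff.1 this
  · intro M _; exact Finsupp.equivFunOnFinite.symm_apply_apply M
  · intro p _; exact Finsupp.equivFunOnFinite.apply_symm_apply p
  · intro M _; rfl

lemma key_id (I L B : MI n) (hIB : I ≤ B + L) :
    ∑ M ∈ Finset.Iic (I ⊓ L),
        ((-1 : ℤ) ^ (mdeg M) * (∏ t, (I t).choose (M t)) * (∏ t, (L t).descFactorial (M t))
          * (mfact (B + L - M) : ℤ))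
      = if I ≤ B then (mfact B : ℤ) * ∏ t, ((B t - I t + L t).descFactorial (L t)) else 0 := by
  have hterm : ∀ M ∈ Finset.Iic (I ⊓ L),
      ((-1 : ℤ) ^ (mdeg M) * (∏ t, (I t).choose (M t)) * (∏ t, (L t).descFactorial (M t))
          * (mfact (B + L - M) : ℤ))
        = ∏ t, ((-1 : ℤ) ^ (M t) * ((I t).choose (M t)) * ((L t).descFactorial (M t))
            * ((B t + L t - M t).factorial)) := by
    intro M _
    rw [mdeg_eq_sum, ← Finset.prod_pow_eq_pow_sum, mfact_eq_prod]
    push_cast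
    rw [← Finset.prod_mul_distrib, ← Finset.prod_mul_distrib, ← Finset.prod_mul_distrib]
    apply Finset.prod_congr rfl
    intro t _
    rfl
  rw [Finset.sum_congr rfl hterm, sum_Iic_prod (I ⊓ L)
    (fun t m => (-1 : ℤ) ^ m * ((I t).choose m) * ((L t).descFactorial m)
      * ((B t + L t - m).factorial))]
  have hcoord : ∀ t, (I ⊓ L) t = min (I t) (L t) := fun t => by
    simp [Finsupp.inf_apply]
  have hmain : ∀ t : Fin n,
      ∑ m ∈ Finset.range ((I ⊓ L) t + 1),
          ((-1 : ℤ) ^ m * ((I t).choose m) * ((L t).descFactorial m)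
            * ((B t + L t - m).factorial))
        = if I t ≤ B t then ((B t).factorial : ℤ) * ((B t - I t + L t).descFactorial (L t))
          else 0 := by
    intro t
    rw [hcoord t]
    exact core2' (I t) (L t) (B t) (by have := hIB t; simpa [Finsupp.add_apply] using this)
  rw [Finset.prod_congr rfl (fun t _ => hmain t)]
  by_cases hIBle : I ≤ B
  · rw [if_pos hIBle]
    rw [Finset.prod_congr rfl (fun t _ => if_pos (hIBle t)), mfact_eq_prod]
    push_cast
    rw [Finset.prod_mul_distrib]
  · rw [if_neg hIBle]
    rw [Finsupp.le_def] at hIBle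
    push_neg at hIBle
    obtain ⟨t, ht⟩ := hIBle
    exact Finset.prod_eq_zero (Finset.mem_univ t) (if_neg (by omega))

end AuxBFW

section AuxBFW2

variable {n : ℕ}

lemma bf_mono (c : ℂ) (k : ℕ) (I J : MI n) (s : F n) (a : ℕ) (A : MI n) :
    bf (wmono c k I J) s (a, A) =
      if k + mdeg J ≤ a ∧ I ≤ A + J then
        c * ((mfact (A + J) : ℂ) / (mfact A : ℂ)) * s (a - k - mdeg J, A + J - I)
      else 0 := by
  simp only [bf, wmono, Prod.mk.injEq]
  by_cases hC : k + mdeg J ≤ a ∧ I ≤ A + J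
  · obtain ⟨h1, h2⟩ := hC
    have hIm : I ∈ Finset.Iic (A + J) := Finset.mem_Iic.2 h2
    have hJm : J ∈ Finset.Iic (constMI n a) :=
      mem_Iic_constMI.2 (fun t => le_trans (apply_le_mdeg J t) (by omega))
    have hkm : k ∈ Finset.range (a + 1) := by simp; omega
    rw [Finset.sum_eq_single_of_mem k hkm ?f1, Finset.sum_eq_single_of_mem J hJm ?f2,
      if_pos h1, Finset.sum_eq_single_of_mem I hIm ?f3]
    · simp [h1, h2]
    case f1 =>
      intro b _ hb
      apply Finset.sum_eq_zero; intro J' _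
      split
      · exact Finset.sum_eq_zero fun y _ => by simp [hb]
      · rfl
    case f2 =>
      intro b _ hb
      split
      · exact Finset.sum_eq_zero fun y _ => by simp [hb]
      · rfl
    case f3 =>
      intro b _ hb
      simp [hb]
  · rw [if_neg hC]
    apply Finset.sum_eq_zero; intro m _
    apply Finset.sum_eq_zero; intro J' _
    split
    · apply Finset.sum_eq_zero; intro I' hI'
      split_ifs with hd
      · exfalso
        obtain ⟨rfl, rfl, rfl⟩ := hd
        exact hC ⟨by assumption, Finset.mem_Iic.1 hI'⟩
      · ring
    · rfl

lemma bf_add (f g : W n) (s : F n) (x : ℕ × MI n) :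
    bf (fun z => f z + g z) s x = bf f s x + bf g s x := by
  unfold bf
  rw [← Finset.sum_add_distrib]
  refine Finset.sum_congr rfl fun m _ => ?_
  rw [← Finset.sum_add_distrib]
  refine Finset.sum_congr rfl fun J' _ => ?_
  split
  · rw [← Finset.sum_add_distrib]
    exact Finset.sum_congr rfl fun I' _ => by ring
  · simp

lemma bf_zero (s : F n) (x : ℕ × MI n) : bf (fun _ => (0 : ℂ)) s x = 0 := by
  unfold bf
  apply Finset.sum_eq_zero; intro m _
  apply Finset.sum_eq_zero; intro J' _
  split
  · exact Finset.sum_eq_zero fun I' _ => by simp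
  · rfl

lemma bf_finsum {α : Type*} (T : Finset α) (Ff : α → W n) (s : F n) (x : ℕ × MI n) :
    bf (fun z => ∑ M ∈ T, Ff M z) s x = ∑ M ∈ T, bf (Ff M) s x := by
  classical
  induction T using Finset.induction with
  | empty => simpa using bf_zero s x
  | @insert a T ha ih =>
      rw [Finset.sum_insert ha, ← ih, ← bf_add]
      apply congrFun; apply congrFun; apply congrArg
      funext z
      rw [Finset.sum_insert ha]

def wcoef (I L M : MI n) : ℂ :=
  ((-1 : ℂ) ^ mdeg M / (mfact M : ℂ)) * ((mfact I : ℂ) / (mfact (I - M) : ℂ)) *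
    ((mfact L : ℂ) / (mfact (L - M) : ℂ))

def wterm (I J K L M : MI n) (x : ℕ × MI n × MI n) : ℂ :=
  if mdeg M ≤ x.1 then
    ∑ p ∈ Finset.HasAntidiagonal.antidiagonal (x.1 - mdeg M),
      ∑ i ∈ Finset.HasAntidiagonal.antidiagonal x.2.1,
        ∑ j ∈ Finset.HasAntidiagonal.antidiagonal x.2.2,
          ((-1 : ℂ) ^ mdeg M / (mfact M : ℂ)) *
            ((mfact (i.1 + M) : ℂ) / (mfact i.1 : ℂ)) *
            ((mfact (j.2 + M) : ℂ) / (mfact j.2 : ℂ)) *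
            wmono 1 0 I J (p.1, i.1 + M, j.1) * wmono 1 0 K L (p.2, i.2, j.2 + M)
  else 0

lemma sub_of_add_eq {a b M : MI n} (h : a + M = b) : a = b - M := by
  ext t
  have := Finsupp.ext_iff.1 h t
  simp only [Finsupp.add_apply] at this
  simp only [Finsupp.tsub_apply]
  omega

lemma le_of_add_eq {a b M : MI n} (h : a + M = b) : M ≤ b := by
  intro t
  have := Finsupp.ext_iff.1 h t
  simp only [Finsupp.add_apply] at this
  omega

lemma wterm_eq_zero (I J K L M : MI n) (x : ℕ × MI n × MI n)
    (hM : ¬ (M ≤ I ∧ M ≤ L)) : wterm I J K L M x = 0 := by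
  unfold wterm
  split
  · apply Finset.sum_eq_zero; intro p _
    apply Finset.sum_eq_zero; intro i _
    apply Finset.sum_eq_zero; intro j _
    simp only [wmono, Prod.mk.injEq]
    split_ifs with h1 h2
    · exact absurd ⟨le_of_add_eq h1.2.1, le_of_add_eq h2.2.2⟩ hM
    · simp
    · simp
    · simp
  · rfl

lemma wterm_eq (I J K L M : MI n) (x : ℕ × MI n × MI n)
    (hMI : M ≤ I) (hML : M ≤ L) :
    wterm I J K L M x = wmono (wcoef I L M) (mdeg M) ((I - M) + K) (J + (L - M)) x := by
  by_cases hx : x = (mdeg M, (I - M) + K, J + (L - M))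
  · subst hx
    rw [wmono, if_pos rfl, wterm]
    simp only [le_refl, if_true, Nat.sub_self, Finset.Nat.antidiagonal_zero,
      Finset.sum_singleton]
    rw [Finset.sum_eq_single_of_mem (I - M, K) (Finset.HasAntidiagonal.mem_antidiagonal.2 rfl) ?i1,
      Finset.sum_eq_single_of_mem (J, L - M) (Finset.HasAntidiagonal.mem_antidiagonal.2 rfl) ?j1]
    · rw [tsub_add_cancel_of_le hMI, tsub_add_cancel_of_le hML]
      simp [wmono, wcoef]
    case i1 =>
      intro b _ hb
      apply Finset.sum_eq_zero; intro j _
      simp only [wmono, Prod.mk.injEq]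
      split_ifs with h1 h2
      · exfalso
        apply hb
        have hb1 : b.1 = I - M := sub_of_add_eq h1.2.1
        have hb2 : b.2 = K := h2.2.1
        obtain ⟨b1, b2⟩ := b
        simp_all
      · simp
      · simp
      · simp
    case j1 =>
      intro b _ hb
      simp only [wmono, Prod.mk.injEq]
      split_ifs with h1 h2
      · exfalso
        apply hb
        have hb2 : b.2 = L - M := sub_of_add_eq h2.2.2
        have hb1 : b.1 = J := h1.2.2
        obtain ⟨b1, b2⟩ := b
        simp_all
      · simp
      · simp
      · simp
  · rw [wmono, if_neg hx, wterm]
    split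
    · apply Finset.sum_eq_zero; intro p hp
      apply Finset.sum_eq_zero; intro i hi
      apply Finset.sum_eq_zero; intro j hj
      simp only [wmono, Prod.mk.injEq]
      split_ifs with h1 h2
      · exfalso
        apply hx
        rw [Finset.HasAntidiagonal.mem_antidiagonal] at hp hi hj
        obtain ⟨hp1, hiM, hj1⟩ := h1
        obtain ⟨hp2, hi2, hjM⟩ := h2
        have hx1 : x.1 = mdeg M := by omega
        have hii : i.1 = I - M := sub_of_add_eq hiM
        have hjj : j.2 = L - M := sub_of_add_eq hjM
        have hX1 : x.2.1 = (I - M) + K := by rw [← hi, hii, hi2]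
        have hX2 : x.2.2 = J + (L - M) := by rw [← hj, hj1, hjj]
        exact Prod.ext hx1 (Prod.ext hX1 hX2)
      · simp
      · simp
      · simp
    · rfl

lemma wick_mono (I J K L : MI n) (x : ℕ × MI n × MI n) :
    wick (wmono 1 0 I J) (wmono 1 0 K L) x =
      ∑ M ∈ Finset.Iic (I ⊓ L),
        wmono (wcoef I L M) (mdeg M) ((I - M) + K) (J + (L - M)) x := by
  have hL : wick (wmono 1 0 I J) (wmono 1 0 K L) x
      = ∑ M ∈ Finset.Iic (constMI n x.1), wterm I J K L M x := rfl
  rw [hL]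
  have big : Finset.Iic (constMI n x.1) ⊆ Finset.Iic (constMI n x.1 ⊔ (I ⊓ L)) :=
    Finset.Iic_subset_Iic.2 le_sup_left
  have big2 : Finset.Iic (I ⊓ L) ⊆ Finset.Iic (constMI n x.1 ⊔ (I ⊓ L)) :=
    Finset.Iic_subset_Iic.2 le_sup_right
  rw [Finset.sum_subset big ?v1]
  · rw [← Finset.sum_subset big2 ?v2]
    · exact Finset.sum_congr rfl fun M hM => by
        rw [Finset.mem_Iic, le_inf_iff] at hM
        exact wterm_eq I J K L M x hM.1 hM.2
    case v2 =>
      intro M _ hM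
      rw [Finset.mem_Iic, le_inf_iff] at hM
      exact wterm_eq_zero I J K L M x hM
  case v1 =>
    intro M _ hM
    rw [mem_Iic_constMI] at hM
    push_neg at hM
    obtain ⟨t, ht⟩ := hM
    rw [wterm, if_neg (by have := apply_le_mdeg M t; omega)]

lemma mfact_choose {M I : MI n} (h : M ≤ I) :
    mfact I = (∏ t, (I t).choose (M t)) * (mfact M * mfact (I - M)) := by
  rw [mfact_eq_prod, mfact_eq_prod, mfact_eq_prod,
    ← Finset.prod_mul_distrib, ← Finset.prod_mul_distrib]
  apply Finset.prod_congr rfl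
  intro t _
  have hc := Nat.choose_mul_factorial_mul_factorial (h t)
  rw [Finsupp.tsub_apply]
  rw [← hc]; ring

lemma mfact_desc {M L : MI n} (h : M ≤ L) :
    mfact L = (∏ t, (L t).descFactorial (M t)) * mfact (L - M) := by
  rw [mfact_eq_prod, mfact_eq_prod, ← Finset.prod_mul_distrib]
  apply Finset.prod_congr rfl
  intro t _
  have hc := Nat.factorial_mul_descFactorial (h t)
  rw [Finsupp.tsub_apply]
  rw [← hc]; ring

lemma wcoef_eq {M I L : MI n} (hMI : M ≤ I) (hML : M ≤ L) :
    wcoef I L M = ((((-1 : ℤ) ^ mdeg M * (∏ t, (I t).choose (M t))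
      * (∏ t, (L t).descFactorial (M t))) : ℤ) : ℂ) := by
  rw [wcoef, mfact_choose hMI, mfact_desc hML]
  have h1 := mfact_ne_zero M
  have h2 := mfact_ne_zero (I - M)
  have h3 := mfact_ne_zero (L - M)
  push_cast
  field_simp

lemma scalar_id (A J I L : MI n) (h : I ≤ (A + J) + L) :
    ∑ M ∈ Finset.Iic (I ⊓ L), wcoef I L M * ((mfact ((A + J) + L - M) : ℂ) / (mfact A : ℂ))
      = if I ≤ A + J then
          ((mfact (A + J) : ℂ) / (mfact A : ℂ))
            * ((mfact ((A + J - I) + L) : ℂ) / (mfact (A + J - I) : ℂ))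
        else 0 := by
  have hterm : ∀ M ∈ Finset.Iic (I ⊓ L),
      wcoef I L M * ((mfact ((A + J) + L - M) : ℂ) / (mfact A : ℂ))
        = ((((-1 : ℤ) ^ mdeg M * (∏ t, (I t).choose (M t))
            * (∏ t, (L t).descFactorial (M t)) * (mfact ((A + J) + L - M) : ℤ)) : ℤ) : ℂ)
          / (mfact A : ℂ) := by
    intro M hM
    rw [Finset.mem_Iic, le_inf_iff] at hM
    rw [wcoef_eq hM.1 hM.2]
    push_cast
    ring
  rw [Finset.sum_congr rfl hterm, ← Finset.sum_div, ← Int.cast_sum,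
    key_id I L (A + J) h]
  by_cases hIB : I ≤ A + J
  · rw [if_pos hIB, if_pos hIB]
    have hstruct : mfact ((A + J - I) + L)
        = (∏ t, ((A + J) t - I t + L t).descFactorial (L t)) * mfact (A + J - I) := by
      rw [mfact_eq_prod, mfact_eq_prod, ← Finset.prod_mul_distrib]
      apply Finset.prod_congr rfl
      intro t _
      have e1 : ((A + J - I) + L) t = (A + J) t - I t + L t := by
        simp [Finsupp.add_apply, Finsupp.tsub_apply]
      have hd := Nat.factorial_mul_descFactorial
        (show L t ≤ (A + J) t - I t + L t by omega)
      have e2 : ((A + J) t - I t + L t) - L t = (A + J) t - I t := by omega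
      rw [e2] at hd
      rw [e1, ← hd, Finsupp.tsub_apply]
      ring
    rw [hstruct]
    have h2 := mfact_ne_zero (A + J - I)
    have h4 := mfact_ne_zero A
    push_cast
    field_simp
    try ring
  · rw [if_neg hIB, if_neg hIB]
    simp

end AuxBFW2

/-- For any monomials `y^I ȳ^J` and `y^K ȳ^L` in the Wick
algebra, the Bargmann-Fock operator of their Wick product equals the
composition of their Bargmann-Fock operators. -/
theorem bf_of_wick_product (n : ℕ) (I J K L : MI n) (s : F n) :
    bf (wick (wmono 1 0 I J) (wmono 1 0 K L)) s =
      bf (wmono 1 0 I J) (bf (wmono 1 0 K L) s) := by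
  funext x
  obtain ⟨a, A⟩ := x
  have hw : wick (wmono 1 0 I J) (wmono 1 0 K L)
      = fun z => ∑ M ∈ Finset.Iic (I ⊓ L),
          wmono (wcoef I L M) (mdeg M) ((I - M) + K) (J + (L - M)) z :=
    funext (wick_mono I J K L)
  rw [hw, bf_finsum]
  have hterm : ∀ M ∈ Finset.Iic (I ⊓ L),
      bf (wmono (wcoef I L M) (mdeg M) ((I - M) + K) (J + (L - M))) s (a, A)
        = if mdeg J + mdeg L ≤ a ∧ I + K ≤ A + J + L then
            (wcoef I L M * ((mfact ((A + J) + L - M) : ℂ) / (mfact A : ℂ)))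
              * s (a - (mdeg J + mdeg L), A + J + L - (I + K))
          else 0 := by
    intro M hM
    rw [Finset.mem_Iic, le_inf_iff] at hM
    obtain ⟨hMI, hML⟩ := hM
    rw [bf_mono]
    have hdegL : mdeg (L - M) + mdeg M = mdeg L := by
      rw [← mdeg_add, tsub_add_cancel_of_le hML]
    have hdeg : mdeg (J + (L - M)) = mdeg J + (mdeg L - mdeg M) := by
      rw [mdeg_add]; omega
    have hMC : mdeg M ≤ mdeg L := by omega
    have hcondeq : (mdeg M + mdeg (J + (L - M)) ≤ a ∧ (I - M) + K ≤ A + (J + (L - M)))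
        ↔ (mdeg J + mdeg L ≤ a ∧ I + K ≤ A + J + L) := by
      constructor
      · rintro ⟨c1, c2⟩
        refine ⟨by omega, fun t => ?_⟩
        have hct := c2 t
        have h1 := hMI t; have h2 := hML t
        simp only [Finsupp.add_apply, Finsupp.tsub_apply] at hct ⊢
        omega
      · rintro ⟨c1, c2⟩
        refine ⟨by omega, fun t => ?_⟩
        have hct := c2 t
        have h1 := hMI t; have h2 := hML t
        simp only [Finsupp.add_apply, Finsupp.tsub_apply] at hct ⊢
        omega
    rw [if_congr hcondeq rfl rfl]
    split_ifs with hc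
    · have harg1 : a - mdeg M - mdeg (J + (L - M)) = a - (mdeg J + mdeg L) := by omega
      have harg2 : A + (J + (L - M)) - ((I - M) + K) = A + J + L - (I + K) := by
        ext t
        have h1 := hMI t; have h2 := hML t
        have h3 := hc.2 t
        simp only [Finsupp.add_apply, Finsupp.tsub_apply] at h3 ⊢
        omega
      have harg3 : A + (J + (L - M)) = (A + J) + L - M := by
        ext t
        have h2 := hML t
        simp only [Finsupp.add_apply, Finsupp.tsub_apply]
        omega
      rw [harg1, harg2, harg3]
    · rfl
  rw [Finset.sum_congr rfl hterm]
  by_cases hc : mdeg J + mdeg L ≤ a ∧ I + K ≤ A + J + L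
  · simp only [if_pos hc]
    rw [← Finset.sum_mul]
    have hIB : I ≤ (A + J) + L := by
      intro t
      have h1 := hc.2 t
      simp only [Finsupp.add_apply] at h1 ⊢
      omega
    rw [scalar_id A J I L hIB]
    rw [bf_mono, bf_mono]
    by_cases hI : I ≤ A + J
    · have hcond1 : 0 + mdeg J ≤ a ∧ I ≤ A + J := ⟨by omega, hI⟩
      have hcond2 : 0 + mdeg L ≤ a - 0 - mdeg J ∧ K ≤ (A + J - I) + L := by
        constructor
        · omega
        · intro t
          have h1 := hc.2 t
          have h2 := hI t
          simp only [Finsupp.add_apply, Finsupp.tsub_apply] at h1 h2 ⊢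
          omega
      rw [if_pos hI, if_pos hcond1, if_pos hcond2]
      have harg1 : (a - 0 - mdeg J - 0 - mdeg L) = a - (mdeg J + mdeg L) := by omega
      have harg2 : (A + J - I) + L - K = A + J + L - (I + K) := by
        ext t
        have h1 := hc.2 t
        have h2 := hI t
        simp only [Finsupp.add_apply, Finsupp.tsub_apply] at h1 h2 ⊢
        omega
      simp only [harg1, harg2]
      ring
    · rw [if_neg hI, if_neg (by intro hcc; exact hI hcc.2)]
      ring
  · simp only [if_neg hc, Finset.sum_const_zero]
    rw [bf_mono, bf_mono]
    split_ifs with h1 h2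
    · exfalso
      apply hc
      obtain ⟨h1a, h1b⟩ := h1
      obtain ⟨h2a, h2b⟩ := h2
      constructor
      · simp at h2a; omega
      · intro t
        have e1 := h1b t
        have e2 := h2b t
        simp only [Finsupp.add_apply, Finsupp.tsub_apply] at e1 e2 ⊢
        omega
    · simp
    · rfl


end
end

section
/- For a real formal perturbation φ (i.e., φ = φ̄ under the conjugation ħ^{k/2} a y^I ȳ^J ↦ ħ^{k/2} ā ȳ^I y^J) with all terms of degree ≥ 3, the formal inner product ⟨f, g⟩ = ħ^{-n} ∫ f ḡ e^{(−|y|² + φ)/ħ} defined via Feynman-Wick contraction is Hermitian: ⟨f, g⟩ = conj(⟨g, f⟩) for all f, g. -/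
open Finsupp MeasureTheory
open scoped Classical

noncomputable section

/-- `𝒲 ⊗ ℂ((√ħ))`: `f (k, I, J)` is the coefficient of `(√ħ)^k y^I ȳ^J`, `k : ℤ`. -/
abbrev WH (n : ℕ) := ℤ × MI n × MI n → ℂ

/-- Pointwise product on `𝒲 ⊗ ℂ((√ħ))`. -/
def hmul {n : ℕ} (f g : WH n) : WH n := fun x =>
  ∑' k : ℤ, ∑ i ∈ Finset.HasAntidiagonal.antidiagonal x.2.1, ∑ j ∈ Finset.HasAntidiagonal.antidiagonal x.2.2,
    f (k, i.1, j.1) * g (x.1 - k, i.2, j.2)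

/-- The unit of `𝒲 ⊗ ℂ((√ħ))`. -/
def hone (n : ℕ) : WH n := fun x => if x = ((0 : ℤ), (0 : MI n), (0 : MI n)) then 1 else 0

/-- Pointwise powers in `𝒲 ⊗ ℂ((√ħ))`. -/
def hpow {n : ℕ} (f : WH n) : ℕ → WH n
  | 0 => hone n
  | m + 1 => hmul (hpow f m) f

/-- Complex conjugation on `𝒲 ⊗ ℂ((√ħ))`: `(√ħ)^k a y^I ȳ^J ↦ (√ħ)^k ā ȳ^I y^J`. -/
def conjH {n : ℕ} (f : WH n) : WH n := fun x => (starRingEnd ℂ) (f (x.1, x.2.2, x.2.1))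

/-- The formal integral `ħ^{-n} ∫ h e^{(−|y|²+φ)/ħ}` in the `√ħ` grading
(`ħ^m` has `√ħ`-exponent `2m`), defined by expanding `e^{φ/ħ}` and applying the
Wick contraction rule `ħ^{-n} ∫ y^I ȳ^J e^{−|y|²/ħ} = δ_{IJ} I! ħ^{|I|}`. -/
def FIH {n : ℕ} (φ h : WH n) : ℤ → ℂ := fun d =>
  ∑' q : ℕ × MI n,
    ((q.1.factorial : ℂ))⁻¹ * (mfact q.2 : ℂ) *
      hmul (hpow φ q.1) h (d + 2 * (q.1 : ℤ) - 2 * (mdeg q.2 : ℤ), q.2, q.2)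

/-- The formal inner product `⟨f, g⟩ = ħ^{-n} ∫ f ḡ e^{(−|y|²+φ)/ħ}` in the
`√ħ` grading. -/
def ipH {n : ℕ} (φ f g : WH n) : ℤ → ℂ := FIH φ (hmul f (conjH g))


lemma myconjH_conjH {n : ℕ} (f : WH n) : conjH (conjH f) = f := by
  funext x; simp [conjH]

lemma mysum_antid_swap {n : ℕ} (I : MI n) (F : MI n × MI n → ℂ) :
    ∑ i ∈ Finset.HasAntidiagonal.antidiagonal I, F i = ∑ i ∈ Finset.HasAntidiagonal.antidiagonal I, F i.swap := by
  refine Finset.sum_nbij' (fun p => p.swap) (fun p => p.swap) ?_ ?_ ?_ ?_ ?_ <;>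
    simp [Finset.swap_mem_antidiagonal, add_comm]

lemma myhmul_comm {n : ℕ} (a b : WH n) : hmul a b = hmul b a := by
  funext x
  simp only [hmul]
  rw [← (Equiv.subLeft x.1).tsum_eq]
  refine tsum_congr fun k => ?_
  simp only [Equiv.subLeft_apply, sub_sub_cancel]
  rw [mysum_antid_swap]
  refine Finset.sum_congr rfl fun i _ => ?_
  rw [mysum_antid_swap]
  refine Finset.sum_congr rfl fun j _ => ?_
  simp [mul_comm]

lemma myconjH_hmul {n : ℕ} (a b : WH n) :
    conjH (hmul a b) = hmul (conjH a) (conjH b) := by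
  funext x
  simp only [conjH, hmul, starRingEnd_apply]
  rw [tsum_star]
  refine tsum_congr fun k => ?_
  rw [star_sum, Finset.sum_comm]
  refine Finset.sum_congr rfl fun i _ => ?_
  rw [star_sum]
  refine Finset.sum_congr rfl fun j _ => ?_
  rw [star_mul']

lemma myconjH_hone {n : ℕ} : conjH (hone n) = hone n := by
  funext x
  simp only [conjH, hone, Prod.ext_iff]
  by_cases h1 : x.1 = 0 <;> by_cases h2 : x.2.1 = 0 <;> by_cases h3 : x.2.2 = 0 <;>
    simp [h1, h2, h3]

lemma myconjH_hpow {n : ℕ} (f : WH n) (m : ℕ) :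
    conjH (hpow f m) = hpow (conjH f) m := by
  induction m with
  | zero => exact myconjH_hone
  | succ m ih => simp only [hpow, myconjH_hmul, ih]

/-- For a real formal perturbation `φ ∈ 𝒲` (i.e. `φ = φ̄`)
with all terms of degree `≥ 3`, the formal inner product
`⟨f, g⟩ = ħ^{-n} ∫ f ḡ e^{(−|y|²+φ)/ħ}` is Hermitian:
`⟨f, g⟩ = conj ⟨g, f⟩` for all `f, g ∈ 𝒲 ⊗ ℂ((√ħ))`. -/
theorem formal_inner_product_hermitian (n : ℕ) (φ : WH n)
    (hreal : conjH φ = φ)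
    (hdeg : ∀ x, φ x ≠ 0 → (3 : ℤ) ≤ x.1 + (mdeg x.2.1 : ℤ) + (mdeg x.2.2 : ℤ))
    (hinW : ∀ x, φ x ≠ 0 → ∃ m : ℕ, x.1 = 2 * (m : ℤ))
    (f g : WH n)
    (hf : ∃ N : ℤ, ∀ x, f x ≠ 0 → N ≤ x.1)
    (hg : ∃ N : ℤ, ∀ x, g x ≠ 0 → N ≤ x.1) :
    ∀ d : ℤ, ipH φ f g d = (starRingEnd ℂ) (ipH φ g f d) := by
  intro d
  unfold ipH FIH
  rw [starRingEnd_apply, tsum_star]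
  refine tsum_congr fun q => ?_
  rw [star_mul', star_mul']
  have hc : star (hmul (hpow φ q.1) (hmul g (conjH f))
      (d + 2 * (q.1 : ℤ) - 2 * (mdeg q.2 : ℤ), q.2, q.2)) =
      hmul (hpow φ q.1) (hmul f (conjH g))
      (d + 2 * (q.1 : ℤ) - 2 * (mdeg q.2 : ℤ), q.2, q.2) := by
    have : star (hmul (hpow φ q.1) (hmul g (conjH f))
        (d + 2 * (q.1 : ℤ) - 2 * (mdeg q.2 : ℤ), q.2, q.2)) =
        conjH (hmul (hpow φ q.1) (hmul g (conjH f)))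
        (d + 2 * (q.1 : ℤ) - 2 * (mdeg q.2 : ℤ), q.2, q.2) := rfl
    rw [this, myconjH_hmul, myconjH_hmul, myconjH_hpow, hreal, myconjH_conjH,
      myhmul_comm (conjH g) f]
  rw [hc]
  simp


end
end

section
/- For any smooth real-valued functions φ (the Kähler potential data) realized formally: if φ ∈ 𝒲 has degree ≥ 3, no purely holomorphic and no purely antiholomorphic monomials, and O : 𝒲 → 𝒲 denotes the map f ↦ O_f characterized by f · e^{φ/ħ} = e^{φ/ħ} ⋆ O_f, then O is multiplicative with respect to the induced star product: defining f ⋆_{BT} g by O_{f ⋆_{BT} g} = O_f ⋆ O_g, the operation ⋆_{BT} is an associative product on 𝒲 with unit 1, and O_1 = 1. -/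
open Finsupp MeasureTheory
open scoped Classical

noncomputable section

namespace BT
variable {n : ℕ}

lemma mdeg_zero : mdeg (0 : MI n) = 0 := by simp [mdeg]

lemma mdeg_add (a b : MI n) : mdeg (a + b) = mdeg a + mdeg b := by
  classical
  simp only [mdeg]
  exact Finsupp.sum_add_index' (fun _ => rfl) (fun _ _ _ => rfl)

lemma mdeg_eq_sum (a : MI n) : mdeg a = ∑ i, a i := by
  classical
  rw [mdeg]
  rw [Finsupp.sum_fintype]
  intro i; rfl

lemma apply_le_mdeg (a : MI n) (i : Fin n) : a i ≤ mdeg a := by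
  rw [mdeg_eq_sum]
  exact Finset.single_le_sum (fun _ _ => Nat.zero_le _) (Finset.mem_univ i)

lemma mdeg_eq_zero {a : MI n} (h : mdeg a = 0) : a = 0 := by
  ext i
  have h2 := apply_le_mdeg a i
  rw [h] at h2
  simpa using Nat.le_zero.mp h2

lemma mfact_pos (a : MI n) : 0 < mfact a := by
  classical
  exact Finset.prod_pos (fun i _ => Nat.factorial_pos _)

lemma mfact_ne_zero (a : MI n) : (mfact a : ℂ) ≠ 0 := by
  exact_mod_cast Nat.ne_zero_of_lt (mfact_pos a)

lemma mfact_zero : mfact (0 : MI n) = 1 := by simp [mfact]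

lemma mem_Iic_constMI {k : ℕ} {M : MI n} (h : mdeg M ≤ k) :
    M ∈ Finset.Iic (constMI n k) := by
  rw [Finset.mem_Iic]
  intro i
  simp only [constMI, Finsupp.coe_equivFunOnFinite_symm]
  exact le_trans (apply_le_mdeg M i) h

lemma add_eq_zero_iff (a b : MI n) : a + b = 0 ↔ a = 0 ∧ b = 0 := by
  constructor
  · intro h
    have : mdeg a + mdeg b = 0 := by rw [← mdeg_add, h, mdeg_zero]
    exact ⟨mdeg_eq_zero (by omega), mdeg_eq_zero (by omega)⟩
  · rintro ⟨rfl, rfl⟩; simp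

end BT
namespace BT
variable {n : ℕ}

/-- product of descending factorials -/
def mdsc (K M : MI n) : ℕ := ∏ i, (K i).descFactorial (M i)

/-- product of binomial coefficients -/
def mchoose (N K : MI n) : ℕ := ∏ i, (N i).choose (K i)

lemma mfact_eq_prod (a : MI n) : mfact a = ∏ i, (a i).factorial := by
  classical
  rw [mfact, Finsupp.prod_fintype]
  intro i; rfl

lemma mdsc_zero (K : MI n) : mdsc K 0 = 1 := by simp [mdsc]

lemma le_iff_forall {a b : MI n} : a ≤ b ↔ ∀ i, a i ≤ b i := Finsupp.le_def

lemma mdsc_eq_zero_of_not_le {K M : MI n} (h : ¬ M ≤ K) : mdsc K M = 0 := by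
  rw [le_iff_forall] at h
  push_neg at h
  obtain ⟨i, hi⟩ := h
  exact Finset.prod_eq_zero (Finset.mem_univ i) (Nat.descFactorial_eq_zero_iff_lt.mpr hi)

lemma le_of_mdsc_ne_zero {K M : MI n} (h : mdsc K M ≠ 0) : M ≤ K := by
  by_contra hc
  exact h (mdsc_eq_zero_of_not_le hc)

lemma desc_comp (x m l : ℕ) :
    x.descFactorial m * (x - m).descFactorial l = x.descFactorial (m + l) := by
  induction l with
  | zero => simp
  | succ l ih =>
      rw [Nat.descFactorial_succ, show m + (l + 1) = (m + l) + 1 by omega,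
        Nat.descFactorial_succ, ← ih]
      have : x - m - l = x - (m + l) := by omega
      rw [this]
      ring

lemma mdsc_comp (K M L : MI n) : mdsc K M * mdsc (K - M) L = mdsc K (M + L) := by
  rw [mdsc, mdsc, mdsc, ← Finset.prod_mul_distrib]
  apply Finset.prod_congr rfl
  intro i _
  rw [Finsupp.tsub_apply, Finsupp.add_apply, desc_comp]

lemma mdsc_self (K : MI n) : mdsc K K = mfact K := by
  rw [mdsc, mfact_eq_prod]
  apply Finset.prod_congr rfl
  intro i _
  exact Nat.descFactorial_self _

lemma mdsc_mul_mfact {K M : MI n} (h : M ≤ K) : mdsc K M * mfact (K - M) = mfact K := by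
  have := mdsc_comp K M (K - M)
  rw [mdsc_self, add_tsub_cancel_of_le h, mdsc_self] at this
  exact this

lemma mfact_div_eq_mdsc {K M : MI n} (h : M ≤ K) :
    (mfact K : ℂ) / (mfact (K - M) : ℂ) = (mdsc K M : ℂ) := by
  rw [div_eq_iff (mfact_ne_zero _)]
  exact_mod_cast (mdsc_mul_mfact h).symm

lemma add_choose_mul (a b : ℕ) :
    (a + b).choose a * (a.factorial * b.factorial) = (a + b).factorial := by
  have h := Nat.add_choose_mul_factorial_mul_factorial b a
  rw [Nat.add_comm b a] at h
  rw [← h]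
  ring

lemma mchoose_mul_mfact_mul_mfact (a b : MI n) :
    mchoose (a + b) a * (mfact a * mfact b) = mfact (a + b) := by
  rw [mchoose, mfact_eq_prod, mfact_eq_prod, mfact_eq_prod, ← Finset.prod_mul_distrib,
    ← Finset.prod_mul_distrib]
  apply Finset.prod_congr rfl
  intro i _
  rw [Finsupp.add_apply]
  exact add_choose_mul _ _

lemma desc_vandermonde (x y s : ℕ) :
    (x + y).descFactorial s =
      ∑ p ∈ Finset.HasAntidiagonal.antidiagonal s, s.choose p.1 * (x.descFactorial p.1 * y.descFactorial p.2) := by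
  rw [Nat.descFactorial_eq_factorial_mul_choose, Nat.add_choose_eq, Finset.mul_sum]
  apply Finset.sum_congr rfl
  rintro ⟨a, b⟩ hp
  simp only [Finset.HasAntidiagonal.mem_antidiagonal] at hp
  subst hp
  rw [Nat.descFactorial_eq_factorial_mul_choose, Nat.descFactorial_eq_factorial_mul_choose]
  have h1 : (a + b).choose a * a.factorial * b.factorial = (a + b).factorial := by
    have := add_choose_mul a b
    rw [← this]
    ring
  calc (a + b).factorial * (x.choose a * y.choose b)
      = ((a + b).choose a * a.factorial * b.factorial) * (x.choose a * y.choose b) := by rw [h1]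
    _ = (a + b).choose a * (a.factorial * x.choose a * (b.factorial * y.choose b)) := by ring

/-- box-sum factorization -/
lemma boxSum {R : Type*} [CommSemiring R] (N : MI n) (F : Fin n → ℕ → R) :
    (∑ K ∈ Finset.Iic N, ∏ i, F i (K i)) = ∏ i, ∑ a ∈ Finset.range (N i + 1), F i a := by
  classical
  rw [Finset.prod_univ_sum]
  apply Finset.sum_nbij' (i := fun K => fun i => K i) (j := fun p => Finsupp.equivFunOnFinite.symm p)
  · intro K hK
    rw [Finset.mem_Iic] at hK
    rw [Fintype.mem_piFinset]
    intro i
    rw [Finset.mem_range]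
    have := le_iff_forall.mp hK i
    omega
  · intro p hp
    rw [Fintype.mem_piFinset] at hp
    rw [Finset.mem_Iic, le_iff_forall]
    intro i
    have := hp i
    rw [Finset.mem_range] at this
    simp only [Finsupp.coe_equivFunOnFinite_symm]
    omega
  · intro K _
    ext i
    simp
  · intro p _
    ext i
    simp
  · intro K _
    rfl

/-- multivariate Vandermonde for descending factorials -/
lemma mdsc_vandermonde (X Y N : MI n) :
    mdsc (X + Y) N = ∑ p ∈ Finset.HasAntidiagonal.antidiagonal N,
      mchoose N p.1 * (mdsc X p.1 * mdsc Y p.2) := by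
  classical
  have hbij : ∑ p ∈ Finset.HasAntidiagonal.antidiagonal N, mchoose N p.1 * (mdsc X p.1 * mdsc Y p.2)
      = ∑ K ∈ Finset.Iic N, mchoose N K * (mdsc X K * mdsc Y (N - K)) := by
    apply Finset.sum_nbij' (i := fun p => p.1) (j := fun K => (K, N - K))
    · rintro ⟨a, b⟩ hp
      rw [Finset.HasAntidiagonal.mem_antidiagonal] at hp
      rw [Finset.mem_Iic]
      exact hp ▸ self_le_add_right a b
    · intro K hK
      rw [Finset.mem_Iic] at hK
      rw [Finset.HasAntidiagonal.mem_antidiagonal]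
      exact add_tsub_cancel_of_le hK
    · rintro ⟨a, b⟩ hp
      rw [Finset.HasAntidiagonal.mem_antidiagonal] at hp
      have : N - a = b := by rw [← hp]; exact add_tsub_cancel_left a b
      rw [this]
    · intro K _
      rfl
    · rintro ⟨a, b⟩ hp
      rw [Finset.HasAntidiagonal.mem_antidiagonal] at hp
      simp only
      have : N - a = b := by rw [← hp]; exact add_tsub_cancel_left a b
      rw [this]
  rw [hbij]
  have hstep : ∀ K ∈ Finset.Iic N, mchoose N K * (mdsc X K * mdsc Y (N - K))
      = ∏ i, ((fun i a => (N i).choose a * ((X i).descFactorial a *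
          (Y i).descFactorial (N i - a))) i (K i)) := by
    intro K _
    rw [mchoose, mdsc, mdsc, ← Finset.prod_mul_distrib, ← Finset.prod_mul_distrib]
    apply Finset.prod_congr rfl
    intro i _
    simp only [Finsupp.tsub_apply]
  calc mdsc (X + Y) N
      = ∏ i, ∑ a ∈ Finset.range (N i + 1), (fun i a => (N i).choose a *
          ((X i).descFactorial a * (Y i).descFactorial (N i - a))) i a := by
        rw [mdsc]
        apply Finset.prod_congr rfl
        intro i _
        rw [Finsupp.add_apply, desc_vandermonde,
          Finset.Nat.sum_antidiagonal_eq_sum_range_succ_mk]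
    _ = ∑ K ∈ Finset.Iic N, ∏ i, (fun i a => (N i).choose a *
          ((X i).descFactorial a * (Y i).descFactorial (N i - a))) i (K i) :=
        (boxSum N _).symm
    _ = ∑ K ∈ Finset.Iic N, mchoose N K * (mdsc X K * mdsc Y (N - K)) :=
        (Finset.sum_congr rfl hstep).symm

end BT
namespace BT
variable {n : ℕ}

lemma wmono_zero (k : ℕ) (I J : MI n) : wmono (0 : ℂ) k I J = 0 := by
  funext z
  simp [wmono]

lemma wmono_coeff_sum {α : Type*} (s : Finset α) (c : α → ℂ) (k : ℕ) (I J : MI n) :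
    wmono (∑ a ∈ s, c a) k I J = ∑ a ∈ s, wmono (c a) k I J := by
  funext z
  rw [Finset.sum_apply]
  simp only [wmono]
  split
  · rfl
  · exact (Finset.sum_const_zero).symm

lemma wick_add_left (u u' v : W n) : wick (u + u') v = wick u v + wick u' v := by
  funext x
  rw [Pi.add_apply]
  symm
  show (∑ M ∈ Finset.Iic (constMI n x.1), _) + (∑ M ∈ Finset.Iic (constMI n x.1), _)
    = ∑ M ∈ Finset.Iic (constMI n x.1), _
  rw [← Finset.sum_add_distrib]
  apply Finset.sum_congr rfl; intro M _
  by_cases hM : mdeg M ≤ x.1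
  · rw [if_pos hM, if_pos hM, if_pos hM, ← Finset.sum_add_distrib]
    apply Finset.sum_congr rfl; intro p _
    rw [← Finset.sum_add_distrib]
    apply Finset.sum_congr rfl; intro i _
    rw [← Finset.sum_add_distrib]
    apply Finset.sum_congr rfl; intro j _
    rw [Pi.add_apply]
    ring
  · rw [if_neg hM, if_neg hM, if_neg hM, add_zero]

lemma wick_add_right (u v v' : W n) : wick u (v + v') = wick u v + wick u v' := by
  funext x
  rw [Pi.add_apply]
  symm
  show (∑ M ∈ Finset.Iic (constMI n x.1), _) + (∑ M ∈ Finset.Iic (constMI n x.1), _)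
    = ∑ M ∈ Finset.Iic (constMI n x.1), _
  rw [← Finset.sum_add_distrib]
  apply Finset.sum_congr rfl; intro M _
  by_cases hM : mdeg M ≤ x.1
  · rw [if_pos hM, if_pos hM, if_pos hM, ← Finset.sum_add_distrib]
    apply Finset.sum_congr rfl; intro p _
    rw [← Finset.sum_add_distrib]
    apply Finset.sum_congr rfl; intro i _
    rw [← Finset.sum_add_distrib]
    apply Finset.sum_congr rfl; intro j _
    rw [Pi.add_apply]
    ring
  · rw [if_neg hM, if_neg hM, if_neg hM, add_zero]

lemma wick_zero_left (v : W n) : wick 0 v = 0 := by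
  funext x
  show (∑ M ∈ Finset.Iic (constMI n x.1), _) = _
  rw [Pi.zero_apply]
  apply Finset.sum_eq_zero; intro M _
  split
  · apply Finset.sum_eq_zero; intro p _
    apply Finset.sum_eq_zero; intro i _
    apply Finset.sum_eq_zero; intro j _
    rw [Pi.zero_apply]
    ring
  · rfl

lemma wick_zero_right (u : W n) : wick u 0 = 0 := by
  funext x
  show (∑ M ∈ Finset.Iic (constMI n x.1), _) = _
  rw [Pi.zero_apply]
  apply Finset.sum_eq_zero; intro M _
  split
  · apply Finset.sum_eq_zero; intro p _
    apply Finset.sum_eq_zero; intro i _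
    apply Finset.sum_eq_zero; intro j _
    rw [Pi.zero_apply]
    ring
  · rfl

lemma wick_sum_left {α : Type*} (s : Finset α) (F : α → W n) (v : W n) :
    wick (∑ a ∈ s, F a) v = ∑ a ∈ s, wick (F a) v := by
  classical
  induction s using Finset.cons_induction with
  | empty => simpa using wick_zero_left v
  | cons a s ha ih =>
      rw [Finset.sum_cons, Finset.sum_cons, wick_add_left, ih]

lemma wick_sum_right {α : Type*} (s : Finset α) (u : W n) (F : α → W n) :
    wick u (∑ a ∈ s, F a) = ∑ a ∈ s, wick u (F a) := by
  classical
  induction s using Finset.cons_induction with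
  | empty => simpa using wick_zero_right u
  | cons a s ha ih =>
      rw [Finset.sum_cons, Finset.sum_cons, wick_add_right, ih]

lemma wick_congr {u u' v v' : W n} {D : ℕ}
    (hu : ∀ z : ℕ × MI n × MI n, 2 * z.1 + mdeg z.2.1 + mdeg z.2.2 ≤ D → u z = u' z)
    (hv : ∀ z : ℕ × MI n × MI n, 2 * z.1 + mdeg z.2.1 + mdeg z.2.2 ≤ D → v z = v' z) :
    ∀ x : ℕ × MI n × MI n, 2 * x.1 + mdeg x.2.1 + mdeg x.2.2 ≤ D →
      wick u v x = wick u' v' x := by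
  rintro ⟨k, A, B⟩ hx
  simp only at hx
  show (∑ M ∈ Finset.Iic (constMI n k), _) = _
  apply Finset.sum_congr rfl; intro M _
  split
  next hM =>
    apply Finset.sum_congr rfl; intro p hp
    apply Finset.sum_congr rfl; intro i hi
    apply Finset.sum_congr rfl; intro j hj
    simp only [Finset.HasAntidiagonal.mem_antidiagonal] at hp hi hj
    have e1 : mdeg A = mdeg i.1 + mdeg i.2 := by rw [← hi, mdeg_add]
    have e2 : mdeg B = mdeg j.1 + mdeg j.2 := by rw [← hj, mdeg_add]
    have e3 : mdeg (i.1 + M) = mdeg i.1 + mdeg M := mdeg_add _ _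
    have e4 : mdeg (j.2 + M) = mdeg j.2 + mdeg M := mdeg_add _ _
    rw [hu (p.1, i.1 + M, j.1) (by simp only; omega), hv (p.2, i.2, j.2 + M) (by simp only; omega)]
  next => rfl

/-- points of degree at most `D` -/
def ptsLE (n D : ℕ) : Finset (ℕ × MI n × MI n) :=
  (Finset.range (D + 1) ×ˢ Finset.Iic (constMI n D) ×ˢ Finset.Iic (constMI n D)).filter
    (fun z => 2 * z.1 + mdeg z.2.1 + mdeg z.2.2 ≤ D)

lemma mem_ptsLE {D : ℕ} {z : ℕ × MI n × MI n}
    (hz : 2 * z.1 + mdeg z.2.1 + mdeg z.2.2 ≤ D) : z ∈ ptsLE n D := by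
  rw [ptsLE, Finset.mem_filter]
  refine ⟨?_, hz⟩
  rw [Finset.mem_product, Finset.mem_product]
  refine ⟨by rw [Finset.mem_range]; omega, mem_Iic_constMI (by omega), mem_Iic_constMI (by omega)⟩

lemma decomp_eval (f : W n) (D : ℕ) (z : ℕ × MI n × MI n)
    (hz : 2 * z.1 + mdeg z.2.1 + mdeg z.2.2 ≤ D) :
    (∑ w ∈ ptsLE n D, wmono (f w) w.1 w.2.1 w.2.2) z = f z := by
  classical
  rw [Finset.sum_apply]
  rw [Finset.sum_eq_single_of_mem z (mem_ptsLE hz)]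
  · simp [wmono]
  · intro w _ hw
    simp only [wmono]
    rw [if_neg]
    intro hc
    exact hw (by rw [hc])

end BT
namespace BT
variable {n : ℕ}

lemma triple_eq {α β γ : Type*} {a a' : α} {b b' : β} {c c' : γ} :
    ((a, b, c) : α × β × γ) = (a', b', c') ↔ a = a' ∧ b = b' ∧ c = c' := by
  simp [Prod.ext_iff]

lemma mul_ite_zero₂ {c c1 c2 : ℂ} {P Q : Prop} [Decidable P] [Decidable Q] (h : ¬P ∨ ¬Q) :
    (c * (if P then c1 else 0) * (if Q then c2 else 0)) = 0 := by
  rcases h with h | h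
  · rw [if_neg h, mul_zero, zero_mul]
  · rw [if_neg h, mul_zero]

lemma wick_mono_mono (c1 c2 : ℂ) (k1 k2 : ℕ) (I1 J1 I2 J2 : MI n) :
    wick (wmono c1 k1 I1 J1) (wmono c2 k2 I2 J2) =
      ∑ M ∈ Finset.Iic (I1 ⊓ J2),
        wmono (c1 * c2 * ((-1 : ℂ) ^ mdeg M / (mfact M : ℂ) *
            (mdsc I1 M : ℂ) * (mdsc J2 M : ℂ)))
          (k1 + k2 + mdeg M) (I1 - M + I2) (J1 + (J2 - M)) := by
  classical
  funext x
  obtain ⟨k, A, B⟩ := x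
  rw [Finset.sum_apply]
  have hsub1 : Finset.Iic (constMI n k) ⊆ Finset.Iic (constMI n k ⊔ (I1 ⊓ J2)) :=
    Finset.Iic_subset_Iic.mpr le_sup_left
  have hsub2 : Finset.Iic (I1 ⊓ J2) ⊆ Finset.Iic (constMI n k ⊔ (I1 ⊓ J2)) :=
    Finset.Iic_subset_Iic.mpr le_sup_right
  rw [show (wick (wmono c1 k1 I1 J1) (wmono c2 k2 I2 J2) (k, A, B)) =
    ∑ M ∈ Finset.Iic (constMI n k), (if mdeg M ≤ k then
      ∑ p ∈ Finset.HasAntidiagonal.antidiagonal (k - mdeg M),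
        ∑ i ∈ Finset.HasAntidiagonal.antidiagonal A,
          ∑ j ∈ Finset.HasAntidiagonal.antidiagonal B,
            ((-1 : ℂ) ^ mdeg M / (mfact M : ℂ)) *
              ((mfact (i.1 + M) : ℂ) / (mfact i.1 : ℂ)) *
              ((mfact (j.2 + M) : ℂ) / (mfact j.2 : ℂ)) *
              wmono c1 k1 I1 J1 (p.1, i.1 + M, j.1) *
              wmono c2 k2 I2 J2 (p.2, i.2, j.2 + M)
      else 0) from rfl]
  rw [Finset.sum_subset hsub1 (by
    intro M _ hM
    rw [if_neg]
    intro hc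
    exact hM (mem_Iic_constMI hc))]
  rw [Finset.sum_subset hsub2 (by
    intro M _ hM
    rw [Finset.mem_Iic] at hM
    have hdz : (mdsc I1 M : ℂ) * (mdsc J2 M : ℂ) = 0 := by
      rcases (not_and_or.mp (fun hc : M ≤ I1 ∧ M ≤ J2 => hM (le_inf hc.1 hc.2))) with hc | hc
      · rw [mdsc_eq_zero_of_not_le hc]; simp
      · rw [mdsc_eq_zero_of_not_le (K := J2) hc]; simp
    have hz : c1 * c2 * ((-1 : ℂ) ^ mdeg M / (mfact M : ℂ) *
        (mdsc I1 M : ℂ) * (mdsc J2 M : ℂ)) = 0 := by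
      rw [mul_assoc ((-1 : ℂ) ^ mdeg M / (mfact M : ℂ)), hdz, mul_zero, mul_zero]
    rw [hz]
    simp [wmono])]
  apply Finset.sum_congr rfl
  intro M _
  simp only [wmono]
  by_cases hMle : M ≤ I1 ∧ M ≤ J2
  · by_cases hx : ((k, A, B) : ℕ × MI n × MI n) =
        (k1 + k2 + mdeg M, I1 - M + I2, J1 + (J2 - M))
    · rw [triple_eq] at hx
      obtain ⟨e1, e2, e3⟩ := hx
      rw [if_pos (by omega : mdeg M ≤ k), if_pos (by rw [triple_eq]; exact ⟨e1, e2, e3⟩)]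
      rw [Finset.sum_eq_single_of_mem (k1, k2) (by rw [Finset.HasAntidiagonal.mem_antidiagonal]; omega)
        (by
          rintro ⟨p1, p2⟩ hp hne
          rw [Finset.HasAntidiagonal.mem_antidiagonal] at hp
          apply Finset.sum_eq_zero
          rintro ⟨i1, i2⟩ _
          apply Finset.sum_eq_zero
          rintro ⟨j1, j2⟩ _
          refine mul_ite_zero₂ ?_
          by_contra hcon
          rw [not_or, not_not, not_not, triple_eq, triple_eq] at hcon
          obtain ⟨⟨hP1, -, -⟩, hQ1, -, -⟩ := hcon
          exact hne (by rw [Prod.ext_iff]; exact ⟨hP1, hQ1⟩))]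
      rw [Finset.sum_eq_single_of_mem (I1 - M, I2) (by rw [Finset.HasAntidiagonal.mem_antidiagonal, e2])
        (by
          rintro ⟨i1, i2⟩ hi hne
          rw [Finset.HasAntidiagonal.mem_antidiagonal] at hi
          apply Finset.sum_eq_zero
          rintro ⟨j1, j2⟩ _
          refine mul_ite_zero₂ (Or.inl ?_)
          rw [triple_eq]
          rintro ⟨-, hq2, -⟩
          apply hne
          have hi1' : i1 = I1 - M := by
            have h' : i1 + M = (I1 - M) + M := by
              rw [hq2, tsub_add_cancel_of_le hMle.1]
            exact add_right_cancel h'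
          have hi2 : i2 = I2 := by
            have h' : i1 + i2 = (I1 - M) + I2 := by rw [hi, e2]
            rw [hi1'] at h'
            exact add_left_cancel h'
          rw [Prod.ext_iff]
          exact ⟨hi1', hi2⟩)]
      rw [Finset.sum_eq_single_of_mem (J1, J2 - M) (by rw [Finset.HasAntidiagonal.mem_antidiagonal, e3])
        (by
          rintro ⟨j1, j2⟩ hj hne
          rw [Finset.HasAntidiagonal.mem_antidiagonal] at hj
          refine mul_ite_zero₂ (Or.inr ?_)
          rw [triple_eq]
          rintro ⟨-, -, hq3⟩
          apply hne
          have hj2' : j2 = J2 - M := by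
            have h' : j2 + M = (J2 - M) + M := by
              rw [hq3, tsub_add_cancel_of_le hMle.2]
            exact add_right_cancel h'
          have hj1 : j1 = J1 := by
            have h' : j1 + j2 = J1 + (J2 - M) := by rw [hj, e3]
            rw [hj2'] at h'
            exact add_right_cancel h'
          rw [Prod.ext_iff]
          exact ⟨hj1, hj2'⟩)]
      rw [tsub_add_cancel_of_le hMle.1, tsub_add_cancel_of_le hMle.2]
      rw [if_pos rfl, if_pos rfl]
      rw [mfact_div_eq_mdsc hMle.1, mfact_div_eq_mdsc hMle.2]
      ring
    · have hx' : ¬(((k, A, B) : ℕ × MI n × MI n) =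
          (k1 + k2 + mdeg M, I1 - M + I2, J1 + (J2 - M))) := hx
      conv_rhs => rw [if_neg hx']
      rw [triple_eq] at hx
      split
      next hMk =>
        apply Finset.sum_eq_zero
        rintro ⟨p1, p2⟩ hp
        apply Finset.sum_eq_zero
        rintro ⟨i1, i2⟩ hi
        apply Finset.sum_eq_zero
        rintro ⟨j1, j2⟩ hj
        rw [Finset.HasAntidiagonal.mem_antidiagonal] at hp hi hj
        refine mul_ite_zero₂ ?_
        by_contra hcon
        rw [not_or, not_not, not_not, triple_eq, triple_eq] at hcon
        obtain ⟨⟨f1, f2, f3⟩, f4, f5, f6⟩ := hcon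
        apply hx
        have hi1' : i1 = I1 - M := by
          have h' : i1 + M = (I1 - M) + M := by rw [f2, tsub_add_cancel_of_le hMle.1]
          exact add_right_cancel h'
        have hj2' : j2 = J2 - M := by
          have h' : j2 + M = (J2 - M) + M := by rw [f6, tsub_add_cancel_of_le hMle.2]
          exact add_right_cancel h'
        refine ⟨by omega, ?_, ?_⟩
        · rw [← hi, hi1', f5]
        · rw [← hj, hj2', f3]
      next => rfl
  · have hdz : (mdsc I1 M : ℂ) * (mdsc J2 M : ℂ) = 0 := by
      rcases (not_and_or.mp hMle) with hc | hc
      · rw [mdsc_eq_zero_of_not_le hc]; simp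
      · rw [mdsc_eq_zero_of_not_le (K := J2) hc]; simp
    have hz : c1 * c2 * ((-1 : ℂ) ^ mdeg M / (mfact M : ℂ) *
        (mdsc I1 M : ℂ) * (mdsc J2 M : ℂ)) = 0 := by
      rw [mul_assoc ((-1 : ℂ) ^ mdeg M / (mfact M : ℂ)), hdz, mul_zero, mul_zero]
    rw [hz]
    rw [show (if ((k, A, B) : ℕ × MI n × MI n) =
        (k1 + k2 + mdeg M, I1 - M + I2, J1 + (J2 - M)) then (0 : ℂ) else 0) = 0 from by
      split <;> rfl]
    split
    next hMk =>
      apply Finset.sum_eq_zero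
      rintro ⟨p1, p2⟩ _
      apply Finset.sum_eq_zero
      rintro ⟨i1, i2⟩ _
      apply Finset.sum_eq_zero
      rintro ⟨j1, j2⟩ _
      refine mul_ite_zero₂ ?_
      by_contra hcon
      rw [not_or, not_not, not_not, triple_eq, triple_eq] at hcon
      obtain ⟨⟨-, f2, -⟩, -, -, f6⟩ := hcon
      exact hMle ⟨f2 ▸ le_add_self, f6 ▸ le_add_self⟩
    next => rfl

end BT
namespace BT
variable {n : ℕ}

lemma regroup {γ : Type*} [AddCommMonoid γ] (C Ub : MI n) (hCU : C ≤ Ub)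
    (F : MI n × MI n → γ) (hF : ∀ p : MI n × MI n, ¬(p.1 + p.2 ≤ C) → F p = 0) :
    (∑ N ∈ Finset.Iic C, ∑ p ∈ Finset.HasAntidiagonal.antidiagonal N, F p)
      = ∑ p ∈ Finset.Iic Ub ×ˢ Finset.Iic Ub, F p := by
  classical
  have step1 : ∀ N ∈ Finset.Iic C, (∑ p ∈ Finset.HasAntidiagonal.antidiagonal N, F p)
      = ∑ p ∈ Finset.Iic Ub ×ˢ Finset.Iic Ub, (if p.1 + p.2 = N then F p else 0) := by
    intro N hN
    rw [Finset.mem_Iic] at hN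
    have hsub : Finset.HasAntidiagonal.antidiagonal N ⊆ Finset.Iic Ub ×ˢ Finset.Iic Ub := by
      rintro ⟨a, b⟩ hp
      rw [Finset.HasAntidiagonal.mem_antidiagonal] at hp
      rw [Finset.mem_product, Finset.mem_Iic, Finset.mem_Iic]
      constructor
      · exact le_trans (hp ▸ self_le_add_right a b) (le_trans hN hCU)
      · exact le_trans (hp ▸ le_add_self) (le_trans hN hCU)
    calc (∑ p ∈ Finset.HasAntidiagonal.antidiagonal N, F p)
        = ∑ p ∈ Finset.HasAntidiagonal.antidiagonal N, (if p.1 + p.2 = N then F p else 0) :=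
          Finset.sum_congr rfl (fun p hp => by
            rw [if_pos (Finset.HasAntidiagonal.mem_antidiagonal.mp hp)])
      _ = ∑ p ∈ Finset.Iic Ub ×ˢ Finset.Iic Ub, (if p.1 + p.2 = N then F p else 0) :=
          Finset.sum_subset hsub (fun p _ hp =>
            if_neg (fun hc => hp (Finset.HasAntidiagonal.mem_antidiagonal.mpr hc)))
  rw [Finset.sum_congr rfl step1, Finset.sum_comm]
  apply Finset.sum_congr rfl
  intro p _
  rw [Finset.sum_ite_eq (Finset.Iic C) (p.1 + p.2) (fun _ => F p)]
  by_cases h : p.1 + p.2 ≤ C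
  · rw [if_pos (Finset.mem_Iic.mpr h)]
  · rw [if_neg (fun hc => h (Finset.mem_Iic.mp hc)), hF p h]

end BT
namespace BT
variable {n : ℕ}

/-- canonical threefold coefficient -/
noncomputable def canC (c : ℂ) (I1 J2 I2 J3 : MI n) (M a b : MI n) : ℂ :=
  c * ((-1 : ℂ) ^ (mdeg M + mdeg a + mdeg b) /
    ((mfact M : ℂ) * (mfact a : ℂ) * (mfact b : ℂ))) *
    (mdsc I1 (M + a) : ℂ) * (mdsc J2 M : ℂ) * (mdsc I2 b : ℂ) * (mdsc J3 (a + b) : ℂ)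

lemma mchoose_div (a b : MI n) :
    (mchoose (a + b) a : ℂ) = (mfact (a + b) : ℂ) / ((mfact a : ℂ) * (mfact b : ℂ)) := by
  rw [eq_div_iff (mul_ne_zero (mfact_ne_zero a) (mfact_ne_zero b))]
  exact_mod_cast mchoose_mul_mfact_mul_mfact a b

lemma coefL_canon (c1 c2 c3 : ℂ) (I1 J2 I2 J3 M a b : MI n) :
    c1 * c2 * ((-1 : ℂ) ^ mdeg M / (mfact M : ℂ) * (mdsc I1 M : ℂ) * (mdsc J2 M : ℂ)) * c3 *
      ((-1 : ℂ) ^ mdeg (a + b) / (mfact (a + b) : ℂ) *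
        ((mchoose (a + b) a : ℂ) * ((mdsc (I1 - M) a : ℂ) * (mdsc I2 b : ℂ))) *
        (mdsc J3 (a + b) : ℂ)) = canC (c1 * c2 * c3) I1 J2 I2 J3 M a b := by
  have h3 : (mdsc I1 M : ℂ) * (mdsc (I1 - M) a : ℂ) = (mdsc I1 (M + a) : ℂ) := by
    exact_mod_cast mdsc_comp I1 M a
  rw [canC, ← h3, mchoose_div, mdeg_add]
  have hM := mfact_ne_zero (n := n) M
  have ha := mfact_ne_zero (n := n) a
  have hb := mfact_ne_zero (n := n) b
  have hab := mfact_ne_zero (n := n) (a + b)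
  field_simp
  ring

lemma coefR_canon (c1 c2 c3 : ℂ) (I1 J2 I2 J3 P q1 q2 : MI n) :
    c1 * (c2 * c3 * ((-1 : ℂ) ^ mdeg P / (mfact P : ℂ) * (mdsc I2 P : ℂ) * (mdsc J3 P : ℂ))) *
      ((-1 : ℂ) ^ mdeg (q1 + q2) / (mfact (q1 + q2) : ℂ) * (mdsc I1 (q1 + q2) : ℂ) *
        ((mchoose (q1 + q2) q1 : ℂ) * ((mdsc J2 q1 : ℂ) * (mdsc (J3 - P) q2 : ℂ)))) =
      canC (c1 * c2 * c3) I1 J2 I2 J3 q1 q2 P := by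
  have h4 : (mdsc J3 P : ℂ) * (mdsc (J3 - P) q2 : ℂ) = (mdsc J3 (P + q2) : ℂ) := by
    exact_mod_cast mdsc_comp J3 P q2
  rw [canC, show q2 + P = P + q2 from add_comm _ _, ← h4, mchoose_div, mdeg_add]
  have hM := mfact_ne_zero (n := n) P
  have ha := mfact_ne_zero (n := n) q1
  have hb := mfact_ne_zero (n := n) q2
  have hab := mfact_ne_zero (n := n) (q1 + q2)
  field_simp
  ring

lemma canC_zero_of_not_le {c : ℂ} {I1 J2 I2 J3 M a b : MI n}
    (h : ¬(M + a ≤ I1) ∨ ¬(M ≤ J2) ∨ ¬(b ≤ I2) ∨ ¬(a + b ≤ J3)) :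
    canC c I1 J2 I2 J3 M a b = 0 := by
  rw [canC]
  rcases h with h | h | h | h <;> rw [mdsc_eq_zero_of_not_le h] <;> simp

end BT
namespace BT
variable {n : ℕ}

lemma bound_lemmas (I1 I2 J2 J3 : MI n) :
    I1 ≤ I1 + I2 + J2 + J3 ∧ I2 ≤ I1 + I2 + J2 + J3 ∧
    J2 ≤ I1 + I2 + J2 + J3 ∧ J3 ≤ I1 + I2 + J2 + J3 := by
  refine ⟨?_, ?_, ?_, ?_⟩ <;> rw [le_iff_forall] <;> intro i <;>
    simp only [Finsupp.add_apply] <;> omega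

lemma lhs_norm (c1 c2 c3 : ℂ) (k1 k2 k3 : ℕ) (I1 J1 I2 J2 I3 J3 : MI n) :
    wick (wick (wmono c1 k1 I1 J1) (wmono c2 k2 I2 J2)) (wmono c3 k3 I3 J3) =
      ∑ M ∈ Finset.Iic (I1 + I2 + J2 + J3),
        ∑ p ∈ Finset.Iic (I1 + I2 + J2 + J3) ×ˢ Finset.Iic (I1 + I2 + J2 + J3),
          wmono (canC (c1 * c2 * c3) I1 J2 I2 J3 M p.1 p.2)
            (k1 + k2 + mdeg M + k3 + mdeg (p.1 + p.2))
            (I1 - M + I2 - (p.1 + p.2) + I3)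
            (J1 + (J2 - M) + (J3 - (p.1 + p.2))) := by
  classical
  obtain ⟨hI1U, hI2U, hJ2U, hJ3U⟩ := bound_lemmas I1 I2 J2 J3
  rw [wick_mono_mono c1 c2 k1 k2 I1 J1 I2 J2, wick_sum_left]
  rw [Finset.sum_subset (Finset.Iic_subset_Iic.mpr (le_trans inf_le_left hI1U)) (by
    intro M _ hM
    rw [Finset.mem_Iic] at hM
    have hdz : (mdsc I1 M : ℂ) * (mdsc J2 M : ℂ) = 0 := by
      rcases (not_and_or.mp (fun hc : M ≤ I1 ∧ M ≤ J2 => hM (le_inf hc.1 hc.2))) with hc | hc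
      · rw [mdsc_eq_zero_of_not_le hc]; simp
      · rw [mdsc_eq_zero_of_not_le (K := J2) hc]; simp
    have hz : c1 * c2 * ((-1 : ℂ) ^ mdeg M / (mfact M : ℂ) *
        (mdsc I1 M : ℂ) * (mdsc J2 M : ℂ)) = 0 := by
      rw [mul_assoc ((-1 : ℂ) ^ mdeg M / (mfact M : ℂ)), hdz, mul_zero, mul_zero]
    rw [hz, wmono_zero, wick_zero_left])]
  apply Finset.sum_congr rfl
  intro M _
  rw [wick_mono_mono]
  have hNstep : ∀ N ∈ Finset.Iic ((I1 - M + I2) ⊓ J3),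
      wmono (c1 * c2 * ((-1 : ℂ) ^ mdeg M / (mfact M : ℂ) *
          (mdsc I1 M : ℂ) * (mdsc J2 M : ℂ)) * c3 *
          ((-1 : ℂ) ^ mdeg N / (mfact N : ℂ) *
            (mdsc (I1 - M + I2) N : ℂ) * (mdsc J3 N : ℂ)))
        (k1 + k2 + mdeg M + k3 + mdeg N) (I1 - M + I2 - N + I3)
        (J1 + (J2 - M) + (J3 - N))
      = ∑ p ∈ Finset.HasAntidiagonal.antidiagonal N,
          wmono (canC (c1 * c2 * c3) I1 J2 I2 J3 M p.1 p.2)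
            (k1 + k2 + mdeg M + k3 + mdeg (p.1 + p.2))
            (I1 - M + I2 - (p.1 + p.2) + I3)
            (J1 + (J2 - M) + (J3 - (p.1 + p.2))) := by
    intro N _
    have hS : (mdsc (I1 - M + I2) N : ℂ) = ∑ p ∈ Finset.HasAntidiagonal.antidiagonal N,
        ((mchoose N p.1 : ℂ) * ((mdsc (I1 - M) p.1 : ℂ) * (mdsc I2 p.2 : ℂ))) := by
      exact_mod_cast mdsc_vandermonde (I1 - M) I2 N
    rw [hS, Finset.mul_sum, Finset.sum_mul, Finset.mul_sum, wmono_coeff_sum]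
    apply Finset.sum_congr rfl
    intro p hp
    rw [Finset.HasAntidiagonal.mem_antidiagonal] at hp
    rw [← hp, coefL_canon]
  rw [Finset.sum_congr rfl hNstep]
  apply regroup ((I1 - M + I2) ⊓ J3) (I1 + I2 + J2 + J3)
    (le_trans inf_le_right hJ3U)
  intro p hple
  rw [le_inf_iff, not_and_or] at hple
  have hz : canC (c1 * c2 * c3) I1 J2 I2 J3 M p.1 p.2 = 0 := by
    rcases hple with hc | hc
    · by_cases h1 : M + p.1 ≤ I1
      · by_cases h2 : p.2 ≤ I2
        · exfalso
          apply hc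
          rw [le_iff_forall] at h1 h2 ⊢
          intro i
          have := h1 i
          have := h2 i
          simp only [Finsupp.add_apply, Finsupp.tsub_apply] at *
          omega
        · exact canC_zero_of_not_le (Or.inr (Or.inr (Or.inl h2)))
      · exact canC_zero_of_not_le (Or.inl h1)
    · exact canC_zero_of_not_le (Or.inr (Or.inr (Or.inr hc)))
  rw [hz, wmono_zero]

end BT
namespace BT
variable {n : ℕ}

lemma rhs_norm (c1 c2 c3 : ℂ) (k1 k2 k3 : ℕ) (I1 J1 I2 J2 I3 J3 : MI n) :
    wick (wmono c1 k1 I1 J1) (wick (wmono c2 k2 I2 J2) (wmono c3 k3 I3 J3)) =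
      ∑ P ∈ Finset.Iic (I1 + I2 + J2 + J3),
        ∑ q ∈ Finset.Iic (I1 + I2 + J2 + J3) ×ˢ Finset.Iic (I1 + I2 + J2 + J3),
          wmono (canC (c1 * c2 * c3) I1 J2 I2 J3 q.1 q.2 P)
            (k1 + (k2 + k3 + mdeg P) + mdeg (q.1 + q.2))
            (I1 - (q.1 + q.2) + (I2 - P + I3))
            (J1 + (J2 + (J3 - P) - (q.1 + q.2))) := by
  classical
  obtain ⟨hI1U, hI2U, hJ2U, hJ3U⟩ := bound_lemmas I1 I2 J2 J3
  rw [wick_mono_mono c2 c3 k2 k3 I2 J2 I3 J3, wick_sum_right]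
  rw [Finset.sum_subset (Finset.Iic_subset_Iic.mpr (le_trans inf_le_left hI2U)) (by
    intro P _ hP
    rw [Finset.mem_Iic] at hP
    have hdz : (mdsc I2 P : ℂ) * (mdsc J3 P : ℂ) = 0 := by
      rcases (not_and_or.mp (fun hc : P ≤ I2 ∧ P ≤ J3 => hP (le_inf hc.1 hc.2))) with hc | hc
      · rw [mdsc_eq_zero_of_not_le hc]; simp
      · rw [mdsc_eq_zero_of_not_le (K := J3) hc]; simp
    have hz : c2 * c3 * ((-1 : ℂ) ^ mdeg P / (mfact P : ℂ) *
        (mdsc I2 P : ℂ) * (mdsc J3 P : ℂ)) = 0 := by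
      rw [mul_assoc ((-1 : ℂ) ^ mdeg P / (mfact P : ℂ)), hdz, mul_zero, mul_zero]
    rw [hz, wmono_zero, wick_zero_right])]
  apply Finset.sum_congr rfl
  intro P _
  rw [wick_mono_mono]
  have hQstep : ∀ Q ∈ Finset.Iic (I1 ⊓ (J2 + (J3 - P))),
      wmono (c1 * (c2 * c3 * ((-1 : ℂ) ^ mdeg P / (mfact P : ℂ) *
          (mdsc I2 P : ℂ) * (mdsc J3 P : ℂ))) *
          ((-1 : ℂ) ^ mdeg Q / (mfact Q : ℂ) *
            (mdsc I1 Q : ℂ) * (mdsc (J2 + (J3 - P)) Q : ℂ)))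
        (k1 + (k2 + k3 + mdeg P) + mdeg Q) (I1 - Q + (I2 - P + I3))
        (J1 + (J2 + (J3 - P) - Q))
      = ∑ q ∈ Finset.HasAntidiagonal.antidiagonal Q,
          wmono (canC (c1 * c2 * c3) I1 J2 I2 J3 q.1 q.2 P)
            (k1 + (k2 + k3 + mdeg P) + mdeg (q.1 + q.2))
            (I1 - (q.1 + q.2) + (I2 - P + I3))
            (J1 + (J2 + (J3 - P) - (q.1 + q.2))) := by
    intro Q _
    have hS : (mdsc (J2 + (J3 - P)) Q : ℂ) = ∑ q ∈ Finset.HasAntidiagonal.antidiagonal Q,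
        ((mchoose Q q.1 : ℂ) * ((mdsc J2 q.1 : ℂ) * (mdsc (J3 - P) q.2 : ℂ))) := by
      exact_mod_cast mdsc_vandermonde J2 (J3 - P) Q
    rw [hS, Finset.mul_sum, Finset.mul_sum, wmono_coeff_sum]
    apply Finset.sum_congr rfl
    intro q hq
    rw [Finset.HasAntidiagonal.mem_antidiagonal] at hq
    rw [← hq, coefR_canon]
  rw [Finset.sum_congr rfl hQstep]
  apply regroup (I1 ⊓ (J2 + (J3 - P))) (I1 + I2 + J2 + J3)
    (le_trans inf_le_left hI1U)
  intro q hqle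
  rw [le_inf_iff, not_and_or] at hqle
  have hz : canC (c1 * c2 * c3) I1 J2 I2 J3 q.1 q.2 P = 0 := by
    rcases hqle with hc | hc
    · exact canC_zero_of_not_le (Or.inl hc)
    · by_cases h1 : q.1 ≤ J2
      · by_cases h2 : q.2 + P ≤ J3
        · exfalso
          apply hc
          rw [le_iff_forall] at h1 h2 ⊢
          intro i
          have := h1 i
          have := h2 i
          simp only [Finsupp.add_apply, Finsupp.tsub_apply] at *
          omega
        · exact canC_zero_of_not_le (Or.inr (Or.inr (Or.inr h2)))
      · exact canC_zero_of_not_le (Or.inr (Or.inl h1))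
  rw [hz, wmono_zero]

end BT
namespace BT
variable {n : ℕ}

lemma mono_assoc (c1 c2 c3 : ℂ) (k1 k2 k3 : ℕ) (I1 J1 I2 J2 I3 J3 : MI n) :
    wick (wick (wmono c1 k1 I1 J1) (wmono c2 k2 I2 J2)) (wmono c3 k3 I3 J3) =
      wick (wmono c1 k1 I1 J1) (wick (wmono c2 k2 I2 J2) (wmono c3 k3 I3 J3)) := by
  classical
  rw [lhs_norm, rhs_norm, ← Finset.sum_product', ← Finset.sum_product']
  apply Finset.sum_nbij' (i := fun x : MI n × MI n × MI n => (x.2.2, x.1, x.2.1))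
    (j := fun y : MI n × MI n × MI n => (y.2.1, y.2.2, y.1))
  · intro x hx
    simp only [Finset.mem_product] at hx ⊢
    tauto
  · intro y hy
    simp only [Finset.mem_product] at hy ⊢
    tauto
  · intro x _
    rfl
  · intro y _
    rfl
  · rintro ⟨M, a, b⟩ _
    simp only
    by_cases h1 : M + a ≤ I1
    · by_cases h2 : M ≤ J2
      · by_cases h3 : b ≤ I2
        · by_cases h4 : a + b ≤ J3
          · have et : k1 + k2 + mdeg M + k3 + mdeg (a + b)
                = k1 + (k2 + k3 + mdeg b) + mdeg (M + a) := by
              rw [mdeg_add, mdeg_add]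
              omega
            have ey : I1 - M + I2 - (a + b) + I3 = I1 - (M + a) + (I2 - b + I3) := by
              rw [le_iff_forall] at h1 h3
              ext i
              have hh1 := h1 i
              have hh3 := h3 i
              simp only [Finsupp.add_apply, Finsupp.tsub_apply] at *
              omega
            have ez : J1 + (J2 - M) + (J3 - (a + b)) = J1 + (J2 + (J3 - b) - (M + a)) := by
              rw [le_iff_forall] at h2 h4
              ext i
              have hh2 := h2 i
              have hh4 := h4 i
              simp only [Finsupp.add_apply, Finsupp.tsub_apply] at *
              omega
            rw [et, ey, ez]
          · rw [canC_zero_of_not_le (Or.inr (Or.inr (Or.inr h4))), wmono_zero, wmono_zero]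
        · rw [canC_zero_of_not_le (Or.inr (Or.inr (Or.inl h3))), wmono_zero, wmono_zero]
      · rw [canC_zero_of_not_le (Or.inr (Or.inl h2)), wmono_zero, wmono_zero]
    · rw [canC_zero_of_not_le (Or.inl h1), wmono_zero, wmono_zero]

end BT
namespace BT
variable {n : ℕ}

lemma wick_assoc (f g h : W n) : wick (wick f g) h = wick f (wick g h) := by
  classical
  funext x
  set D := 2 * x.1 + mdeg x.2.1 + mdeg x.2.2 with hDdef
  set fD : W n := ∑ w ∈ ptsLE n D, wmono (f w) w.1 w.2.1 w.2.2 with hfD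
  set gD : W n := ∑ w ∈ ptsLE n D, wmono (g w) w.1 w.2.1 w.2.2 with hgD
  set hD : W n := ∑ w ∈ ptsLE n D, wmono (h w) w.1 w.2.1 w.2.2 with hhD
  have hfa : ∀ z : ℕ × MI n × MI n, 2 * z.1 + mdeg z.2.1 + mdeg z.2.2 ≤ D → f z = fD z :=
    fun z hz => (decomp_eval f D z hz).symm
  have hga : ∀ z : ℕ × MI n × MI n, 2 * z.1 + mdeg z.2.1 + mdeg z.2.2 ≤ D → g z = gD z :=
    fun z hz => (decomp_eval g D z hz).symm
  have hha : ∀ z : ℕ × MI n × MI n, 2 * z.1 + mdeg z.2.1 + mdeg z.2.2 ≤ D → h z = hD z :=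
    fun z hz => (decomp_eval h D z hz).symm
  have hxD : 2 * x.1 + mdeg x.2.1 + mdeg x.2.2 ≤ D := le_of_eq hDdef.symm
  have step1 : wick (wick f g) h x = wick (wick fD gD) hD x :=
    wick_congr (fun z hz => wick_congr hfa hga z hz) hha x hxD
  have step3 : wick f (wick g h) x = wick fD (wick gD hD) x :=
    wick_congr hfa (fun z hz => wick_congr hga hha z hz) x hxD
  rw [step1, step3]
  have mid : wick (wick fD gD) hD = wick fD (wick gD hD) := by
    rw [hfD, hgD, hhD]
    simp only [wick_sum_left, wick_sum_right]
    apply Finset.sum_congr rfl; intro w1 _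
    apply Finset.sum_congr rfl; intro w2 _
    apply Finset.sum_congr rfl; intro w3 _
    exact mono_assoc _ _ _ _ _ _ _ _ _ _ _ _
  rw [mid]

end BT
namespace BT
variable {n : ℕ}

lemma wick_one_right (f : W n) : wick f (wone n) = f := by
  classical
  funext x
  obtain ⟨k, A, B⟩ := x
  show (∑ M ∈ Finset.Iic (constMI n k), _) = _
  rw [Finset.sum_eq_single_of_mem 0 (mem_Iic_constMI (by simp [mdeg_zero]))]
  · rw [if_pos (by simp [mdeg_zero])]
    rw [Finset.sum_eq_single_of_mem (k - mdeg (0 : MI n), 0) (by simp)]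
    · rw [Finset.sum_eq_single_of_mem (A, 0) (by simp)]
      · rw [Finset.sum_eq_single_of_mem (B, 0) (by simp)]
        · simp [wone, wmono, mdeg_zero, mfact_zero, div_self (mfact_ne_zero A)]
        · rintro ⟨j1, j2⟩ hj hne
          have : j2 ≠ 0 := by
            rintro rfl
            simp only [Finset.HasAntidiagonal.mem_antidiagonal] at hj
            exact hne (by simp [← hj])
          simp [wone, wmono, Prod.ext_iff, add_eq_zero_iff, this]
      · rintro ⟨i1, i2⟩ hi hne
        have : i2 ≠ 0 := by
          rintro rfl
          simp only [Finset.HasAntidiagonal.mem_antidiagonal] at hi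
          exact hne (by simp [← hi])
        apply Finset.sum_eq_zero
        intro j _
        simp [wone, wmono, Prod.ext_iff, this]
    · rintro ⟨p1, p2⟩ hp hne
      have : p2 ≠ 0 := by
        rintro rfl
        simp only [Finset.HasAntidiagonal.mem_antidiagonal] at hp
        exact hne (by simp [← hp])
      apply Finset.sum_eq_zero; intro i _
      apply Finset.sum_eq_zero; intro j _
      simp [wone, wmono, Prod.ext_iff, this]
  · intro M _ hM
    split
    · apply Finset.sum_eq_zero; intro p _
      apply Finset.sum_eq_zero; intro i _
      apply Finset.sum_eq_zero; intro j _
      simp [wone, wmono, Prod.ext_iff, add_eq_zero_iff, hM]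
    · rfl

end BT
namespace BT
variable {n : ℕ}

lemma wick_one_left (f : W n) : wick (wone n) f = f := by
  classical
  funext x
  obtain ⟨k, A, B⟩ := x
  show (∑ M ∈ Finset.Iic (constMI n k), _) = _
  rw [Finset.sum_eq_single_of_mem 0 (mem_Iic_constMI (by simp [mdeg_zero]))]
  · rw [if_pos (by simp [mdeg_zero])]
    rw [Finset.sum_eq_single_of_mem (0, k - mdeg (0 : MI n)) (by simp)]
    · rw [Finset.sum_eq_single_of_mem (0, A) (by simp)]
      · rw [Finset.sum_eq_single_of_mem (0, B) (by simp)]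
        · simp [wone, wmono, mdeg_zero, mfact_zero, div_self (mfact_ne_zero B)]
        · rintro ⟨j1, j2⟩ hj hne
          have : j1 ≠ 0 := by
            rintro rfl
            simp only [Finset.HasAntidiagonal.mem_antidiagonal] at hj
            exact hne (by simp [← hj])
          simp [wone, wmono, Prod.ext_iff, this]
      · rintro ⟨i1, i2⟩ hi hne
        have : i1 ≠ 0 := by
          rintro rfl
          simp only [Finset.HasAntidiagonal.mem_antidiagonal] at hi
          exact hne (by simp [← hi])
        apply Finset.sum_eq_zero
        intro j _
        simp [wone, wmono, Prod.ext_iff, add_eq_zero_iff, this]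
    · rintro ⟨p1, p2⟩ hp hne
      have : p1 ≠ 0 := by
        rintro rfl
        simp only [Finset.HasAntidiagonal.mem_antidiagonal] at hp
        exact hne (by simp [← hp])
      apply Finset.sum_eq_zero; intro i _
      apply Finset.sum_eq_zero; intro j _
      simp [wone, wmono, Prod.ext_iff, this]
  · intro M _ hM
    split
    · apply Finset.sum_eq_zero; intro p _
      apply Finset.sum_eq_zero; intro i _
      apply Finset.sum_eq_zero; intro j _
      simp [wone, wmono, Prod.ext_iff, add_eq_zero_iff, hM]
    · rfl

end BT
namespace BT
variable {n : ℕ}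

lemma wmul_degGE {f g : W n} {a b : ℕ} (hf : wdegGE f a) (hg : wdegGE g b) :
    wdegGE (wmul f g) (a + b) := by
  classical
  intro x hx
  by_contra hcon
  push_neg at hcon
  apply hx
  apply Finset.sum_eq_zero; rintro ⟨p1, p2⟩ hp
  apply Finset.sum_eq_zero; rintro ⟨i1, i2⟩ hi
  apply Finset.sum_eq_zero; rintro ⟨j1, j2⟩ hj
  simp only [Finset.HasAntidiagonal.mem_antidiagonal] at hp hi hj
  rcases eq_or_ne (f (p1, i1, j1)) 0 with h1 | h1
  · simp [h1]
  rcases eq_or_ne (g (p2, i2, j2)) 0 with h2 | h2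
  · simp [h2]
  exfalso
  have d1 := hf _ h1
  have d2 := hg _ h2
  simp only at d1 d2
  have e1 : mdeg x.2.1 = mdeg i1 + mdeg i2 := by rw [← hi, mdeg_add]
  have e2 : mdeg x.2.2 = mdeg j1 + mdeg j2 := by rw [← hj, mdeg_add]
  omega

lemma wpow_degGE {φ : W n} (hdeg : wdegGE φ 3) (m : ℕ) :
    wdegGE (wpow φ m) (3 * m) := by
  induction m with
  | zero => intro x _; omega
  | succ m ih =>
      have := wmul_degGE ih hdeg
      intro x hx
      have := this x hx
      omega

lemma X_supp {φ : W n} (hdeg : wdegGE φ 3) (z : ℤ × MI n × MI n)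
    (hz : expOverHbar φ z ≠ 0) :
    0 ≤ edeg z ∧ 0 ≤ 3 * z.1 + (mdeg z.2.1 : ℤ) + (mdeg z.2.2 : ℤ) ∧
      (edeg z = 0 → z = (0, 0, 0)) := by
  classical
  have hex : ∃ m : ℕ, ((m.factorial : ℂ))⁻¹ * embW (wpow φ m) (z.1 + (m : ℤ), z.2) ≠ 0 := by
    by_contra hall
    push_neg at hall
    exact hz (by simpa [expOverHbar] using tsum_congr (fun m => hall m) |>.trans tsum_zero)
  obtain ⟨m, hm⟩ := hex
  have hemb : embW (wpow φ m) (z.1 + (m : ℤ), z.2) ≠ 0 := fun h => hm (by simp [h])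
  rw [embW] at hemb
  split at hemb
  case isFalse => exact absurd rfl hemb
  case isTrue hpos =>
    have hw := wpow_degGE hdeg m _ hemb
    simp only at hw
    have ht : (((z.1 + (m : ℤ)).toNat : ℤ)) = z.1 + m := Int.toNat_of_nonneg hpos
    have hw' : (3 : ℤ) * m ≤ 2 * (z.1 + m) + (mdeg z.2.1 : ℤ) + (mdeg z.2.2 : ℤ) := by
      have := hw
      push_cast
      omega
    refine ⟨by simp only [edeg]; omega, by omega, ?_⟩
    intro hed
    simp only [edeg] at hed
    have hm0 : m = 0 := by omega
    subst hm0
    have : wpow φ 0 ((z.1 + (0 : ℤ)).toNat, z.2) ≠ 0 := hemb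
    simp only [wpow, wone, wmono] at this
    split at this
    case isFalse => exact absurd rfl this
    case isTrue heq =>
      injection heq with ha hb
      have hz1 : z.1 = 0 := by omega
      rw [Prod.ext_iff]
      exact ⟨hz1, hb⟩

lemma X_zero {φ : W n} (hdeg : wdegGE φ 3) :
    expOverHbar φ ((0 : ℤ), (0 : MI n), (0 : MI n)) = 1 := by
  classical
  rw [expOverHbar]
  rw [tsum_eq_single 0]
  · simp [embW, wpow, wone, wmono]
  · intro m hm
    have : embW (wpow φ m) ((0 : ℤ) + (m : ℤ), 0, 0) = 0 := by
      rw [embW]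
      split
      case isFalse => rfl
      case isTrue =>
        by_contra hne
        have := wpow_degGE hdeg m _ hne
        simp only [mdeg_zero] at this
        have : (((0 : ℤ) + (m : ℤ)).toNat) = m := by omega
        omega
    simp only [this, mul_zero]

end BT
namespace BT
variable {n : ℕ}

lemma embW_wone_eq (z : ℤ × MI n × MI n) :
    embW (wone n) z = if z = ((0 : ℤ), (0 : MI n), (0 : MI n)) then 1 else 0 := by
  obtain ⟨t, b, c⟩ := z
  by_cases h : (t, b, c) = ((0 : ℤ), (0 : MI n), (0 : MI n))
  · rw [if_pos h]
    rw [Prod.ext_iff] at h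
    obtain ⟨h1, h2⟩ := h
    simp only at h1 h2
    subst h1
    rw [Prod.ext_iff] at h2
    obtain ⟨h2, h3⟩ := h2
    simp only at h2 h3
    subst h2; subst h3
    simp [embW, wone, wmono]
  · rw [if_neg h, embW]
    split
    next ht =>
      simp only [wone, wmono]
      rw [if_neg]
      intro hc
      rw [Prod.ext_iff] at hc
      obtain ⟨h1, h2⟩ := hc
      simp only at h1 h2 ht
      apply h
      rw [Prod.ext_iff]
      refine ⟨by omega, h2⟩
    next => rfl

lemma emul_one_left (E : WE n) : emul (embW (wone n)) E = E := by
  classical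
  funext z
  obtain ⟨t, A, B⟩ := z
  rw [emul]
  rw [tsum_eq_single 0]
  · rw [Finset.sum_eq_single_of_mem (0, A) (by simp)]
    · rw [Finset.sum_eq_single_of_mem (0, B) (by simp)]
      · simp [embW_wone_eq]
      · rintro ⟨j1, j2⟩ hj hne
        have : j1 ≠ 0 := by
          rintro rfl
          simp only [Finset.HasAntidiagonal.mem_antidiagonal] at hj
          exact hne (by simp [← hj])
        simp [embW_wone_eq, Prod.ext_iff, this]
    · rintro ⟨i1, i2⟩ hi hne
      have : i1 ≠ 0 := by
        rintro rfl
        simp only [Finset.HasAntidiagonal.mem_antidiagonal] at hi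
        exact hne (by simp [← hi])
      apply Finset.sum_eq_zero; intro j _
      simp [embW_wone_eq, Prod.ext_iff, this]
  · intro k hk
    apply Finset.sum_eq_zero; intro i _
    apply Finset.sum_eq_zero; intro j _
    simp [embW_wone_eq, Prod.ext_iff, hk]

lemma ewick_one_right (E : WE n) : ewick E (embW (wone n)) = E := by
  classical
  funext z
  obtain ⟨t, A, B⟩ := z
  rw [ewick]
  rw [tsum_eq_single (t, (0 : MI n))]
  · rw [Finset.sum_eq_single_of_mem (A, 0) (by simp)]
    · rw [Finset.sum_eq_single_of_mem (B, 0) (by simp)]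
      · simp [embW_wone_eq, mdeg_zero, mfact_zero, div_self (mfact_ne_zero A)]
      · rintro ⟨j1, j2⟩ hj hne
        have : j2 ≠ 0 := by
          rintro rfl
          simp only [Finset.HasAntidiagonal.mem_antidiagonal] at hj
          exact hne (by simp [← hj])
        simp [embW_wone_eq, Prod.ext_iff, add_eq_zero_iff, this]
    · rintro ⟨i1, i2⟩ hi hne
      have : i2 ≠ 0 := by
        rintro rfl
        simp only [Finset.HasAntidiagonal.mem_antidiagonal] at hi
        exact hne (by simp [← hi])
      apply Finset.sum_eq_zero; intro j _
      simp [embW_wone_eq, Prod.ext_iff, this]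
  · rintro ⟨k, M⟩ hq
    apply Finset.sum_eq_zero; rintro ⟨i1, i2⟩ _
    apply Finset.sum_eq_zero; rintro ⟨j1, j2⟩ _
    rcases eq_or_ne M 0 with rfl | hM
    · have hk : k ≠ t := fun h => hq (by rw [h])
      simp [embW_wone_eq, Prod.ext_iff, add_eq_zero_iff, mdeg_zero]
      intro h
      omega
    · simp [embW_wone_eq, Prod.ext_iff, add_eq_zero_iff, hM]

end BT
namespace BT
variable {n : ℕ}

lemma X_pos_edeg {φ : W n} (hdeg : wdegGE φ 3) {z : ℤ × MI n × MI n}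
    (h0 : expOverHbar φ z ≠ 0) (hne : z ≠ ((0 : ℤ), (0 : MI n), (0 : MI n))) :
    0 < edeg z := by
  have hs := X_supp hdeg _ h0
  exact lt_of_le_of_ne hs.1 (fun he => hne (hs.2.2 he.symm))

lemma emul_X_inj {φ : W n} (hdeg : wdegGE φ 3) {f g : W n}
    (h : emul (embW f) (expOverHbar φ) = emul (embW g) (expOverHbar φ)) : f = g := by
  classical
  have key : ∀ d : ℕ, ∀ x : ℕ × MI n × MI n,
      2 * x.1 + mdeg x.2.1 + mdeg x.2.2 = d → f x = g x := by
    intro d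
    induction d using Nat.strong_induction_on with
    | _ d ih =>
    rintro ⟨m, A, B⟩ hx
    simp only at hx
    set T : W n → ℤ → ℂ := fun a k =>
      ∑ i ∈ Finset.HasAntidiagonal.antidiagonal A, ∑ j ∈ Finset.HasAntidiagonal.antidiagonal B,
        embW a (k, i.1, j.1) * expOverHbar φ ((m : ℤ) - k, i.2, j.2) with hT
    have hh : (∑' k : ℤ, T f k) = ∑' k : ℤ, T g k := by
      have h2 := congrFun h ((m : ℤ), A, B)
      simp only [emul] at h2
      rw [hT]
      exact h2
    have hterm : ∀ (k : ℤ) (i j : MI n × MI n), i.1 + i.2 = A → j.1 + j.2 = B →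
        ((m : ℤ) - k, i.2, j.2) ≠ ((0 : ℤ), (0 : MI n), (0 : MI n)) →
        embW f (k, i.1, j.1) * expOverHbar φ ((m : ℤ) - k, i.2, j.2) =
          embW g (k, i.1, j.1) * expOverHbar φ ((m : ℤ) - k, i.2, j.2) := by
      intro k i j hi hj hne
      rcases eq_or_ne (expOverHbar φ ((m : ℤ) - k, i.2, j.2)) 0 with h0 | h0
      · rw [h0, mul_zero, mul_zero]
      have hpos := X_pos_edeg hdeg h0 hne
      congr 1
      simp only [embW]
      split
      next hk =>
        apply ih (2 * k.toNat + mdeg i.1 + mdeg j.1) ?_ _ rfl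
        have e1 : mdeg A = mdeg i.1 + mdeg i.2 := by rw [← hi, mdeg_add]
        have e2 : mdeg B = mdeg j.1 + mdeg j.2 := by rw [← hj, mdeg_add]
        simp only [edeg] at hpos
        omega
      next => rfl
    have hpt : ∀ k : ℤ, T f k = T g k +
        (if k = (m : ℤ) then f (m, A, B) - g (m, A, B) else 0) := by
      intro k
      by_cases hk : k = (m : ℤ)
      · subst hk
        rw [if_pos rfl, hT]
        simp only
        have hmemA : ((A, 0) : MI n × MI n) ∈ Finset.HasAntidiagonal.antidiagonal A := by simp
        have hmemB : ((B, 0) : MI n × MI n) ∈ Finset.HasAntidiagonal.antidiagonal B := by simp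
        rw [← Finset.sum_erase_add _ _ hmemA, ← Finset.sum_erase_add _ _ hmemA]
        have hrest1 : ∀ i ∈ (Finset.HasAntidiagonal.antidiagonal A).erase ((A, 0) : MI n × MI n),
            (∑ j ∈ Finset.HasAntidiagonal.antidiagonal B,
              embW f ((m : ℤ), i.1, j.1) * expOverHbar φ ((m : ℤ) - (m : ℤ), i.2, j.2))
          = ∑ j ∈ Finset.HasAntidiagonal.antidiagonal B,
              embW g ((m : ℤ), i.1, j.1) * expOverHbar φ ((m : ℤ) - (m : ℤ), i.2, j.2) := by
          intro i hi
          obtain ⟨hne, hmem⟩ := Finset.mem_erase.mp hi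
          simp only [Finset.HasAntidiagonal.mem_antidiagonal] at hmem
          apply Finset.sum_congr rfl; intro j hj
          simp only [Finset.HasAntidiagonal.mem_antidiagonal] at hj
          apply hterm _ _ _ hmem hj
          intro hc
          rw [Prod.ext_iff] at hc
          obtain ⟨-, hc2⟩ := hc
          rw [Prod.ext_iff] at hc2
          apply hne
          have hi2 : i.2 = 0 := hc2.1
          have hi1 : i.1 = A := by rw [← hmem, hi2, add_zero]
          rw [Prod.ext_iff]
          exact ⟨hi1, hi2⟩
        rw [Finset.sum_congr rfl hrest1]
        simp only
        rw [← Finset.sum_erase_add _ _ hmemB, ← Finset.sum_erase_add _ _ hmemB]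
        have hrest2 : ∀ j ∈ (Finset.HasAntidiagonal.antidiagonal B).erase ((B, 0) : MI n × MI n),
            embW f ((m : ℤ), ((A, (0 : MI n)) : MI n × MI n).1, j.1) *
              expOverHbar φ ((m : ℤ) - (m : ℤ), ((A, (0 : MI n)) : MI n × MI n).2, j.2)
          = embW g ((m : ℤ), ((A, (0 : MI n)) : MI n × MI n).1, j.1) *
              expOverHbar φ ((m : ℤ) - (m : ℤ), ((A, (0 : MI n)) : MI n × MI n).2, j.2) := by
          intro j hj
          obtain ⟨hne, hmem⟩ := Finset.mem_erase.mp hj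
          simp only [Finset.HasAntidiagonal.mem_antidiagonal] at hmem
          apply hterm _ _ _ (by simp) hmem
          intro hc
          rw [Prod.ext_iff] at hc
          obtain ⟨-, hc2⟩ := hc
          rw [Prod.ext_iff] at hc2
          apply hne
          have hj2 : j.2 = 0 := hc2.2
          have hj1 : j.1 = B := by rw [← hmem, hj2, add_zero]
          rw [Prod.ext_iff]
          exact ⟨hj1, hj2⟩
        rw [Finset.sum_congr rfl hrest2]
        have hdiag : ∀ a : W n,
            embW a ((m : ℤ), ((A, (0 : MI n)) : MI n × MI n).1,
              ((B, (0 : MI n)) : MI n × MI n).1) *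
            expOverHbar φ ((m : ℤ) - (m : ℤ), ((A, (0 : MI n)) : MI n × MI n).2,
              ((B, (0 : MI n)) : MI n × MI n).2) = a (m, A, B) := by
          intro a
          simp only [sub_self]
          rw [X_zero hdeg, mul_one]
          simp [embW]
        rw [hdiag f, hdiag g]
        ring
      · rw [if_neg hk, add_zero, hT]
        simp only
        apply Finset.sum_congr rfl; intro i hi
        apply Finset.sum_congr rfl; intro j hj
        simp only [Finset.HasAntidiagonal.mem_antidiagonal] at hi hj
        apply hterm _ _ _ hi hj
        intro hc
        rw [Prod.ext_iff] at hc
        exact hk (by have h1 := hc.1; simp only at h1; omega)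
    have hsupp : ∀ k : ℤ,
        k ∉ Finset.Icc (0 : ℤ) ((m : ℤ) + (mdeg A : ℤ) + (mdeg B : ℤ)) → T g k = 0 := by
      intro k hk
      rw [Finset.mem_Icc, not_and_or] at hk
      rw [hT]
      simp only
      apply Finset.sum_eq_zero; intro i hi
      apply Finset.sum_eq_zero; intro j hj
      simp only [Finset.HasAntidiagonal.mem_antidiagonal] at hi hj
      rcases hk with hk | hk
      · push_neg at hk
        simp only [embW]
        rw [if_neg (by omega), zero_mul]
      · push_neg at hk
        rcases eq_or_ne (expOverHbar φ ((m : ℤ) - k, i.2, j.2)) 0 with h0 | h0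
        · rw [h0, mul_zero]
        exfalso
        have hs := (X_supp hdeg _ h0).1
        simp only [edeg] at hs
        have e1 : mdeg i.2 ≤ mdeg A := by rw [← hi, mdeg_add]; omega
        have e2 : mdeg j.2 ≤ mdeg B := by rw [← hj, mdeg_add]; omega
        omega
    have hsumg : Summable (T g) := summable_of_ne_finset_zero hsupp
    have hsumd : Summable (fun k : ℤ =>
        if k = (m : ℤ) then f (m, A, B) - g (m, A, B) else 0) := by
      apply summable_of_ne_finset_zero (s := {(m : ℤ)})
      intro k hk
      rw [if_neg (by simpa using hk)]
    have heq2 : (∑' k : ℤ, T f k) = (∑' k : ℤ, T g k) + (f (m, A, B) - g (m, A, B)) := by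
      rw [tsum_congr hpt, Summable.tsum_add hsumg hsumd, tsum_ite_eq]
    rw [hh] at heq2
    exact sub_eq_zero.mp (left_eq_add.mp heq2)
  funext x
  exact key _ x rfl

end BT
namespace BT
variable {n : ℕ}

set_option maxHeartbeats 1000000 in
lemma ewick_X_inj {φ : W n} (hdeg : wdegGE φ 3) {u v : W n}
    (h : ewick (expOverHbar φ) (embW u) = ewick (expOverHbar φ) (embW v)) : u = v := by
  classical
  have key : ∀ d : ℕ, ∀ x : ℕ × MI n × MI n,
      2 * x.1 + mdeg x.2.1 + mdeg x.2.2 = d → u x = v x := by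
    intro d
    induction d using Nat.strong_induction_on with
    | _ d ih =>
    rintro ⟨m, A, B⟩ hx
    simp only at hx
    set T : W n → ℤ × MI n → ℂ := fun a q =>
      ∑ i ∈ Finset.HasAntidiagonal.antidiagonal A, ∑ j ∈ Finset.HasAntidiagonal.antidiagonal B,
        ((-1 : ℂ) ^ mdeg q.2 / (mfact q.2 : ℂ)) *
          ((mfact (i.1 + q.2) : ℂ) / (mfact i.1 : ℂ)) *
          ((mfact (j.2 + q.2) : ℂ) / (mfact j.2 : ℂ)) *
          expOverHbar φ (q.1, i.1 + q.2, j.1) *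
          embW a ((m : ℤ) - q.1 - (mdeg q.2 : ℤ), i.2, j.2 + q.2) with hT
    have hh : (∑' q : ℤ × MI n, T u q) = ∑' q : ℤ × MI n, T v q := by
      have h2 := congrFun h ((m : ℤ), A, B)
      simp only [ewick] at h2
      rw [hT]
      exact h2
    have hterm : ∀ (q : ℤ × MI n) (i j : MI n × MI n), i.1 + i.2 = A → j.1 + j.2 = B →
        (q.1, i.1 + q.2, j.1) ≠ ((0 : ℤ), (0 : MI n), (0 : MI n)) →
        ((-1 : ℂ) ^ mdeg q.2 / (mfact q.2 : ℂ)) *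
          ((mfact (i.1 + q.2) : ℂ) / (mfact i.1 : ℂ)) *
          ((mfact (j.2 + q.2) : ℂ) / (mfact j.2 : ℂ)) *
          expOverHbar φ (q.1, i.1 + q.2, j.1) *
          embW u ((m : ℤ) - q.1 - (mdeg q.2 : ℤ), i.2, j.2 + q.2) =
        ((-1 : ℂ) ^ mdeg q.2 / (mfact q.2 : ℂ)) *
          ((mfact (i.1 + q.2) : ℂ) / (mfact i.1 : ℂ)) *
          ((mfact (j.2 + q.2) : ℂ) / (mfact j.2 : ℂ)) *
          expOverHbar φ (q.1, i.1 + q.2, j.1) *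
          embW v ((m : ℤ) - q.1 - (mdeg q.2 : ℤ), i.2, j.2 + q.2) := by
      intro q i j hi hj hne
      rcases eq_or_ne (expOverHbar φ (q.1, i.1 + q.2, j.1)) 0 with h0 | h0
      · rw [h0, mul_zero, zero_mul, zero_mul]
      have hpos := X_pos_edeg hdeg h0 hne
      congr 1
      simp only [embW]
      split
      next hk =>
        apply ih (2 * ((m : ℤ) - q.1 - (mdeg q.2 : ℤ)).toNat + mdeg i.2 + mdeg (j.2 + q.2))
          ?_ _ rfl
        have e1 : mdeg A = mdeg i.1 + mdeg i.2 := by rw [← hi, mdeg_add]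
        have e2 : mdeg B = mdeg j.1 + mdeg j.2 := by rw [← hj, mdeg_add]
        have e3 : mdeg (i.1 + q.2) = mdeg i.1 + mdeg q.2 := mdeg_add _ _
        have e4 : mdeg (j.2 + q.2) = mdeg j.2 + mdeg q.2 := mdeg_add _ _
        simp only [edeg] at hpos
        omega
      next => rfl
    have hpt : ∀ q : ℤ × MI n, T u q = T v q +
        (if q = ((0 : ℤ), (0 : MI n)) then u (m, A, B) - v (m, A, B) else 0) := by
      rintro ⟨k, M⟩
      by_cases hq : ((k, M) : ℤ × MI n) = ((0 : ℤ), (0 : MI n))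
      · rw [hq, if_pos rfl]
        have hsub : T u ((0 : ℤ), (0 : MI n)) - T v ((0 : ℤ), (0 : MI n)) =
            u (m, A, B) - v (m, A, B) := by
          rw [hT]
          simp only
          rw [← Finset.sum_sub_distrib]
          rw [Finset.sum_congr rfl (fun i _ => (Finset.sum_sub_distrib (s := Finset.HasAntidiagonal.antidiagonal B) _ _).symm)]
          rw [Finset.sum_eq_single_of_mem (((0 : MI n), A) : MI n × MI n) (by simp)]
          · rw [Finset.sum_eq_single_of_mem (((0 : MI n), B) : MI n × MI n) (by simp)]
            · simp only [mdeg_zero, mfact_zero, add_zero, zero_add, pow_zero, Nat.cast_one,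
                div_one, sub_zero, Nat.cast_zero]
              rw [X_zero hdeg]
              have hval : ∀ a : W n, embW a ((m : ℤ), A, B) = a (m, A, B) := by
                intro a
                simp [embW]
              rw [hval, hval, div_self (mfact_ne_zero B)]
              ring
            · rintro ⟨j1, j2⟩ hj hne
              simp only [Finset.HasAntidiagonal.mem_antidiagonal] at hj
              rw [sub_eq_zero]
              apply hterm ((0 : ℤ), (0 : MI n)) ((0 : MI n), A) (j1, j2) (by simp) hj
              intro hc
              rw [Prod.ext_iff] at hc
              obtain ⟨-, hc2⟩ := hc
              rw [Prod.ext_iff] at hc2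
              have hj1 : j1 = 0 := hc2.2
              exact hne (by rw [Prod.ext_iff]; exact ⟨hj1, by rw [← hj, hj1, zero_add]⟩)
          · rintro ⟨i1, i2⟩ hi hne
            simp only [Finset.HasAntidiagonal.mem_antidiagonal] at hi
            apply Finset.sum_eq_zero
            rintro ⟨j1, j2⟩ hj
            simp only [Finset.HasAntidiagonal.mem_antidiagonal] at hj
            rw [sub_eq_zero]
            apply hterm ((0 : ℤ), (0 : MI n)) (i1, i2) (j1, j2) hi hj
            intro hc
            rw [Prod.ext_iff] at hc
            obtain ⟨-, hc2⟩ := hc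
            rw [Prod.ext_iff] at hc2
            have hi1 : i1 = 0 := by
              have := hc2.1
              simpa using this
            exact hne (by rw [Prod.ext_iff]; exact ⟨hi1, by rw [← hi, hi1, zero_add]⟩)
        rw [← hsub]
        ring
      · rw [if_neg hq, add_zero, hT]
        simp only
        apply Finset.sum_congr rfl; intro i hi
        apply Finset.sum_congr rfl; intro j hj
        simp only [Finset.HasAntidiagonal.mem_antidiagonal] at hi hj
        have hne2 : (((k, M) : ℤ × MI n).1, i.1 + ((k, M) : ℤ × MI n).2, j.1) ≠
            ((0 : ℤ), (0 : MI n), (0 : MI n)) := by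
          intro hc
          rw [Prod.ext_iff] at hc
          obtain ⟨hc1, hc2⟩ := hc
          rw [Prod.ext_iff] at hc2
          apply hq
          have hM : M = 0 := ((add_eq_zero_iff _ _).mp hc2.1).2
          rw [Prod.ext_iff]
          exact ⟨hc1, hM⟩
        exact hterm (k, M) i j hi hj hne2
    have hsupp : ∀ q : ℤ × MI n,
        q ∉ (Finset.Icc (-((m : ℤ) + (mdeg A : ℤ) + (mdeg B : ℤ))) (m : ℤ)) ×ˢ
          (Finset.Iic (constMI n (2 * m + mdeg A + mdeg B))) → T v q = 0 := by
      intro q hq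
      rw [hT]
      simp only
      apply Finset.sum_eq_zero; intro i hi
      apply Finset.sum_eq_zero; intro j hj
      simp only [Finset.HasAntidiagonal.mem_antidiagonal] at hi hj
      rcases eq_or_ne (expOverHbar φ (q.1, i.1 + q.2, j.1)) 0 with h0 | h0
      · rw [h0, mul_zero, zero_mul]
      rcases eq_or_ne (embW v ((m : ℤ) - q.1 - (mdeg q.2 : ℤ), i.2, j.2 + q.2)) 0 with h1 | h1
      · rw [h1, mul_zero]
      exfalso
      apply hq
      have hs := (X_supp hdeg _ h0).2.1
      simp only at hs
      have ht : (0 : ℤ) ≤ (m : ℤ) - q.1 - (mdeg q.2 : ℤ) := by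
        by_contra hcon
        push_neg at hcon
        rw [embW, if_neg (by exact not_le.mpr hcon)] at h1
        exact h1 rfl
      have e1 : mdeg i.1 ≤ mdeg A := by rw [← hi, mdeg_add]; omega
      have e2 : mdeg j.1 ≤ mdeg B := by rw [← hj, mdeg_add]; omega
      have e3 : mdeg (i.1 + q.2) = mdeg i.1 + mdeg q.2 := mdeg_add _ _
      rw [Finset.mem_product]
      constructor
      · rw [Finset.mem_Icc]
        omega
      · apply mem_Iic_constMI
        omega
    have hsumg : Summable (T v) := summable_of_ne_finset_zero hsupp
    have hsumd : Summable (fun q : ℤ × MI n =>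
        if q = ((0 : ℤ), (0 : MI n)) then u (m, A, B) - v (m, A, B) else 0) := by
      apply summable_of_ne_finset_zero (s := {((0 : ℤ), (0 : MI n))})
      intro q hq
      rw [if_neg (by simpa using hq)]
    have heq2 : (∑' q : ℤ × MI n, T u q) =
        (∑' q : ℤ × MI n, T v q) + (u (m, A, B) - v (m, A, B)) := by
      rw [tsum_congr hpt, Summable.tsum_add hsumg hsumd, tsum_ite_eq]
    rw [hh] at heq2
    exact sub_eq_zero.mp (left_eq_add.mp heq2)
  funext x
  exact key _ x rfl

end BT
/-- Let `φ ∈ 𝒲` have all terms of degree `≥ 3`, with no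
purely holomorphic and no purely antiholomorphic monomials, and let
`O : 𝒲 → 𝒲` be the map `f ↦ O_f` characterized by
`f · e^{φ/ħ} = e^{φ/ħ} ⋆ O_f`. Defining `f ⋆_BT g` by
`O_{f ⋆_BT g} = O_f ⋆ O_g`, the operation `⋆_BT` is an associative product on
`𝒲` with unit `1`, and `O_1 = 1`. -/
theorem berezin_toeplitz_star_product (n : ℕ) (φ : W n) (hdeg : wdegGE φ 3)
    (hnohol : ∀ (k : ℕ) (I : MI n), φ (k, I, 0) = 0)
    (hnoanti : ∀ (k : ℕ) (J : MI n), φ (k, (0 : MI n), J) = 0)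
    (O : W n → W n)
    (hO : ∀ f : W n,
      emul (embW f) (expOverHbar φ) = ewick (expOverHbar φ) (embW (O f)))
    (bt : W n → W n → W n)
    (hbt : ∀ f g : W n, O (bt f g) = wick (O f) (O g)) :
    O (wone n) = wone n ∧
    (∀ f : W n, bt f (wone n) = f ∧ bt (wone n) f = f) ∧
    (∀ f g h : W n, bt (bt f g) h = bt f (bt g h)) := by
  classical
  have hOone : O (wone n) = wone n := by
    apply BT.ewick_X_inj hdeg
    rw [← hO (wone n), BT.emul_one_left, BT.ewick_one_right]
  have hOinj : ∀ f g : W n, O f = O g → f = g := by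
    intro f g hfg
    apply BT.emul_X_inj hdeg
    rw [hO f, hO g, hfg]
  refine ⟨hOone, ?_, ?_⟩
  · intro f
    constructor
    · apply hOinj
      rw [hbt, hOone, BT.wick_one_right]
    · apply hOinj
      rw [hbt, hOone, BT.wick_one_left]
  · intro f g h
    apply hOinj
    rw [hbt, hbt, hbt, hbt, BT.wick_assoc]

end
end
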